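/- arXiv:2510.06549 — 7 statements merged into one kernel-verified Lean document; each statement's English description precedes it below -/
import Mathlib

section
/- For any nonnegative square matrix A, the spectral radius of the symmetrized matrix Ā defined by Ā(i,j) = sqrt(A(i,j)·A(j,i)) is at most the spectral radius of A. -/
/-- The spectral radius of a real square matrix: the supremum of the absolute
values of its (complex) eigenvalues. -/
noncomputable def specRad {n : ℕ} (A : Matrix (Fin n) (Fin n) ℝ) : ℝ :=
  sSup ((fun z : ℂ => ‖z‖) '' spectrum ℂ (A.map Complex.ofReal))

/-!
Writing `Ā` for the symmetrization, induction on `m` with Cauchy–Schwarz in the inner index gives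
`|(Ā ^ m) i j| ≤ √((A ^ m) i j * (A ^ m) j i)`. Since `√(x y) ≤ √((x² + y²) / 2)`, summing squares
yields `‖Ā ^ m‖ ≤ ‖A ^ m‖` for the Frobenius norm, which is submultiplicative, and Gelfand's formula
`ρ(M) = lim ‖M ^ m‖ ^ (1 / m)` turns this into `ρ(Ā) ≤ ρ(A)`.
-/

open scoped ENNReal Matrix.Norms.Frobenius

theorem spectralRadius_le_of_forall_nnnorm_pow_le {A : Type*} [NormedRing A] [NormedAlgebra ℂ A]
    [CompleteSpace A] {a b : A} (h : ∀ m : ℕ, ‖b ^ m‖₊ ≤ ‖a ^ m‖₊) :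
    spectralRadius ℂ b ≤ spectralRadius ℂ a :=
  le_of_tendsto_of_tendsto' (spectrum.pow_nnnorm_pow_one_div_tendsto_nhds_spectralRadius b)
    (spectrum.pow_nnnorm_pow_one_div_tendsto_nhds_spectralRadius a)
    fun m => ENNReal.rpow_le_rpow (by exact_mod_cast h m) (by positivity)

theorem spectralRadius_ne_top {A : Type*} [NormedRing A] [NormedAlgebra ℂ A] [CompleteSpace A]
    (a : A) : spectralRadius ℂ a ≠ ∞ :=
  ne_top_of_le_ne_top (by simp [ENNReal.mul_eq_top])
    (spectrum.spectralRadius_le_pow_nnnorm_pow_one_div ℂ a 0)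

theorem specRad_eq_toReal_spectralRadius {n : ℕ} (A : Matrix (Fin n) (Fin n) ℝ) :
    specRad A = (spectralRadius ℂ (A.map Complex.ofReal)).toReal := by
  rw [specRad, spectralRadius, iSup_subtype', ENNReal.toReal_iSup fun _ => ENNReal.coe_ne_top,
    Set.image_eq_range]
  rfl

namespace Matrix

noncomputable def geomMeanSymm {ι : Type*} (A : Matrix ι ι ℝ) : Matrix ι ι ℝ :=
  of fun i j => √(A i j * A j i)

variable {ι : Type*} [Fintype ι]

theorem abs_geomMeanSymm_pow_apply_le [DecidableEq ι] {A : Matrix ι ι ℝ}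
    (hA : ∀ i j, 0 ≤ A i j) (m : ℕ) (i j : ι) :
    |(A.geomMeanSymm ^ m) i j| ≤ √((A ^ m) i j * (A ^ m) j i) := by
  induction m generalizing i j with
  | zero =>
    by_cases h : i = j
    · simp [h]
    · simp [h, Ne.symm h]
  | succ m ih =>
    have hAm := pow_apply_nonneg hA m
    calc |(A.geomMeanSymm ^ (m + 1)) i j|
        ≤ ∑ k, √(A i k * A k i) * |(A.geomMeanSymm ^ m) k j| := by
          rw [pow_succ', mul_apply]
          refine (Finset.abs_sum_le_sum_abs _ _).trans_eq ?_
          simp only [abs_mul, geomMeanSymm, of_apply, abs_of_nonneg (Real.sqrt_nonneg _)]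
      _ ≤ ∑ k, √(A i k * A k i) * √((A ^ m) k j * (A ^ m) j k) := by
          gcongr with k
          exact ih k j
      _ = ∑ k, √(A i k * (A ^ m) k j) * √(A k i * (A ^ m) j k) := by
          refine Finset.sum_congr rfl fun k _ => ?_
          rw [← Real.sqrt_mul (mul_nonneg (hA i k) (hA k i)),
            ← Real.sqrt_mul (mul_nonneg (hA i k) (hAm k j))]
          ring_nf
      _ ≤ √(∑ k, A i k * (A ^ m) k j) * √(∑ k, A k i * (A ^ m) j k) :=
          Real.sum_sqrt_mul_sqrt_le _ (fun k => mul_nonneg (hA i k) (hAm k j))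
            (fun k => mul_nonneg (hA k i) (hAm j k))
      _ = √((A ^ (m + 1)) i j * (A ^ (m + 1)) j i) := by
          rw [← Real.sqrt_mul (Finset.sum_nonneg fun k _ => mul_nonneg (hA i k) (hAm k j)),
            pow_succ', mul_apply, ← pow_succ', pow_succ, mul_apply]
          simp only [mul_comm (A _ i)]

theorem frobenius_norm_le_of_abs_le_sqrt_mul {B C : Matrix ι ι ℝ}
    (h : ∀ i j, |B i j| ≤ √(C i j * C j i)) : ‖B‖ ≤ ‖C‖ := by
  have hentry : ∀ i j, B i j ^ 2 ≤ (C i j ^ 2 + C j i ^ 2) / 2 := by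
    intro i j
    calc B i j ^ 2 = |B i j| ^ 2 := (sq_abs _).symm
      _ ≤ √(C i j * C j i) ^ 2 := by gcongr; exact h i j
      _ = max (C i j * C j i) 0 := Real.sq_sqrt'
      _ ≤ (C i j ^ 2 + C j i ^ 2) / 2 :=
          max_le (by nlinarith [sq_nonneg (C i j - C j i)]) (by positivity)
  have hsum : ∑ i, ∑ j, B i j ^ 2 ≤ ∑ i, ∑ j, C i j ^ 2 := calc
    ∑ i, ∑ j, B i j ^ 2 ≤ ∑ i, ∑ j, (C i j ^ 2 + C j i ^ 2) / 2 := by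
      gcongr with i _ j; exact hentry i j
    _ = ∑ i, ∑ j, C i j ^ 2 := by
      simp only [← Finset.sum_div, Finset.sum_add_distrib]
      rw [Finset.sum_comm (f := fun i j => C j i ^ 2)]
      ring
  simp only [frobenius_norm_def, Real.norm_eq_abs, Real.rpow_two, sq_abs]
  gcongr

end Matrix

theorem stmt1 {n : ℕ} (A : Matrix (Fin n) (Fin n) ℝ) (hA : ∀ i j, 0 ≤ A i j) :
    specRad (Matrix.of fun i j => Real.sqrt (A i j * A j i)) ≤ specRad A := by
  change specRad A.geomMeanSymm ≤ specRad A
  rw [specRad_eq_toReal_spectralRadius, specRad_eq_toReal_spectralRadius]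
  refine ENNReal.toReal_mono (spectralRadius_ne_top _)
    (spectralRadius_le_of_forall_nnnorm_pow_le fun m => ?_)
  have hmap (M : Matrix (Fin n) (Fin n) ℝ) : ‖M.map Complex.ofReal ^ m‖₊ = ‖M ^ m‖₊ := by
    change ‖M.map Complex.ofRealHom ^ m‖₊ = _
    rw [← M.map_pow]
    exact Matrix.frobenius_nnnorm_map_eq _ _ Complex.nnnorm_real
  rw [hmap, hmap, ← NNReal.coe_le_coe, coe_nnnorm, coe_nnnorm]
  exact Matrix.frobenius_norm_le_of_abs_le_sqrt_mul (Matrix.abs_geomMeanSymm_pow_apply_le hA m)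
end

section
/- For any nonnegative square matrix A and indices i,j, we have (Ā^n)_{i,j}^2 ≤ (A^n)_{i,j} · (A^n)_{j,i}, where Ā(i,j) = sqrt(A(i,j)·A(j,i)). (This is the Cauchy–Schwarz step: the square of the sum over walks of geometric means of forward and backward walk weights is at most the product of the total forward and backward walk weights.) -/
/-!
Expanding `(M * N) i j` over the middle index, bound each term by the product of two geometric
means, regroup the four factors into a forward and a backward walk weight, and apply
Cauchy–Schwarz in the form `∑ √a √b ≤ √(∑ a) √(∑ b)`. This shows that an entrywise bound
`M a b ≤ √(P a b * Q b a)` is preserved under matrix products, hence under powers.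
-/

open Finset Real

namespace Matrix

theorem mul_apply_le_sqrt_mul_mul {l m o : Type*} [Fintype m]
    {M P : Matrix l m ℝ} {Q : Matrix m l ℝ} {N R : Matrix m o ℝ} {S : Matrix o m ℝ}
    (hM : ∀ a b, M a b ≤ √(P a b * Q b a)) (hN : ∀ a b, N a b ≤ √(R a b * S b a))
    (hN₀ : ∀ a b, 0 ≤ N a b) (hP : ∀ a b, 0 ≤ P a b) (hQ : ∀ a b, 0 ≤ Q a b)
    (hR : ∀ a b, 0 ≤ R a b) (hS : ∀ a b, 0 ≤ S a b) (i : l) (j : o) :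
    (M * N) i j ≤ √((P * R) i j * (S * Q) j i) := by
  have hforward : ∀ k, 0 ≤ P i k * R k j := fun k => mul_nonneg (hP i k) (hR k j)
  have hbackward : ∀ k, 0 ≤ S j k * Q k i := fun k => mul_nonneg (hS j k) (hQ k i)
  calc (M * N) i j = ∑ k, M i k * N k j := mul_apply
    _ ≤ ∑ k, √(P i k * R k j) * √(S j k * Q k i) := sum_le_sum fun k _ => by
        calc M i k * N k j ≤ √(P i k * Q k i) * √(R k j * S j k) :=
              mul_le_mul (hM i k) (hN k j) (hN₀ k j) (sqrt_nonneg _)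
          _ = √(P i k * R k j) * √(S j k * Q k i) := by
              rw [← sqrt_mul (mul_nonneg (hP i k) (hQ k i)), ← sqrt_mul (hforward k)]
              ring_nf
    _ ≤ √(∑ k, P i k * R k j) * √(∑ k, S j k * Q k i) :=
        sum_sqrt_mul_sqrt_le _ hforward hbackward
    _ = √((P * R) i j * (S * Q) j i) := by
        rw [mul_apply, mul_apply, sqrt_mul (sum_nonneg fun k _ => hforward k)]

theorem pow_apply_le_sqrt_mul {ι : Type*} [Fintype ι] [DecidableEq ι] {M A : Matrix ι ι ℝ}
    (hM₀ : ∀ a b, 0 ≤ M a b) (hM : ∀ a b, M a b ≤ √(A a b * A b a)) (hA : ∀ a b, 0 ≤ A a b)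
    (k : ℕ) (i j : ι) :
    (M ^ k) i j ≤ √((A ^ k) i j * (A ^ k) j i) := by
  induction k generalizing i j with
  | zero => by_cases h : i = j <;> simp [h, eq_comm]
  | succ k ih =>
    have h := mul_apply_le_sqrt_mul_mul hM ih (pow_apply_nonneg hM₀ k) hA hA
      (pow_apply_nonneg hA k) (pow_apply_nonneg hA k) i j
    rwa [← pow_succ', ← pow_succ', ← pow_succ] at h

end Matrix

theorem stmt3 {n : ℕ} (A : Matrix (Fin n) (Fin n) ℝ) (hA : ∀ i j, 0 ≤ A i j)
    (k : ℕ) (i j : Fin n) :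
    (((Matrix.of fun a b => Real.sqrt (A a b * A b a)) ^ k) i j) ^ 2 ≤
      (A ^ k) i j * (A ^ k) j i := by
  set B : Matrix (Fin n) (Fin n) ℝ := Matrix.of fun a b => √(A a b * A b a)
  have hB₀ : ∀ a b, 0 ≤ B a b := fun a b => sqrt_nonneg _
  have hBk : (B ^ k) i j ≤ √((A ^ k) i j * (A ^ k) j i) :=
    Matrix.pow_apply_le_sqrt_mul hB₀ (fun a b => le_rfl) hA k i j
  calc ((B ^ k) i j) ^ 2 ≤ √((A ^ k) i j * (A ^ k) j i) ^ 2 :=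
        pow_le_pow_left₀ (Matrix.pow_apply_nonneg hB₀ k i j) hBk 2
    _ = (A ^ k) i j * (A ^ k) j i :=
        sq_sqrt (mul_nonneg (Matrix.pow_apply_nonneg hA k i j) (Matrix.pow_apply_nonneg hA k j i))
end

section
/- Let P be the random walk matrix of a connected weighted bipartite graph with parts X and Y, self-adjoint with respect to the stationary distribution μ. If g: X ∪ Y → ℝ satisfies ⟨g, 1_X⟩_μ = ⟨g, 1_Y⟩_μ = 0, then ⟨g, Pg⟩_μ ≤ λ₂(P) · 2·sqrt(⟨g_X, g_X⟩_μ · ⟨g_Y, g_Y⟩_μ), where g_X (resp. g_Y) agrees with g on X (resp. Y) and is 0 elsewhere. -/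
/-!
Rescale `g` by `s` on `X` and by `t = s⁻¹` on `Y`. Since `P` maps functions supported on one
part to functions supported on the other, `⟨g, Pg⟩_μ` only picks up the factor `s t = 1`, and
the rescaled function is still orthogonal to `1`. The variational bound therefore gives
`⟨g, Pg⟩_μ ≤ λ₂ (s² ‖g_X‖² + t² ‖g_Y‖²)`, and the choice `s² ‖g_X‖² = t² ‖g_Y‖²` turns the
right-hand side into `2 λ₂ ‖g_X‖ ‖g_Y‖`.
-/

open Finset

section BipartiteScaling

variable {α : Type*} [Fintype α] (part : α → Bool)

def scaleParts (s t : ℝ) (g : α → ℝ) : α → ℝ :=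
  fun x => if part x then s * g x else t * g x

variable {part}

lemma mulVec_scaleParts_of_bipartite {P : Matrix α α ℝ}
    (hbip : ∀ x y, P x y ≠ 0 → part x ≠ part y) (s t : ℝ) (g : α → ℝ) (x : α) :
    P.mulVec (scaleParts part s t g) x = (if part x then t else s) * P.mulVec g x := by
  simp only [Matrix.mulVec, dotProduct, mul_sum]
  refine sum_congr rfl fun y _ => ?_
  by_cases hxy : part x = part y
  · have hP : P x y = 0 := not_not.mp fun h => hbip x y h hxy
    simp [hP]
  · have hy : part y = !part x := Bool.eq_not.mpr (Ne.symm hxy)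
    cases hx : part x <;> simp [scaleParts, hy, hx] <;> ring

lemma sum_mul_scaleParts_mul_mulVec {P : Matrix α α ℝ}
    (hbip : ∀ x y, P x y ≠ 0 → part x ≠ part y) (μ : α → ℝ) (s t : ℝ) (g : α → ℝ) :
    ∑ x, μ x * scaleParts part s t g x * P.mulVec (scaleParts part s t g) x =
      s * t * ∑ x, μ x * g x * P.mulVec g x := by
  rw [mul_sum]
  refine sum_congr rfl fun x _ => ?_
  rw [mulVec_scaleParts_of_bipartite hbip]
  cases hx : part x <;> simp [scaleParts, hx] <;> ring

lemma sum_mul_scaleParts (μ : α → ℝ) (s t : ℝ) (g : α → ℝ) :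
    ∑ x, μ x * scaleParts part s t g x =
      s * ∑ x, μ x * g x * (if part x then 1 else 0) +
        t * ∑ x, μ x * g x * (if part x then 0 else 1) := by
  rw [mul_sum, mul_sum, ← sum_add_distrib]
  refine sum_congr rfl fun x _ => ?_
  cases hx : part x <;> simp [scaleParts, hx] <;> ring

lemma sum_mul_scaleParts_mul_self (μ : α → ℝ) (s t : ℝ) (g : α → ℝ) :
    ∑ x, μ x * scaleParts part s t g x * scaleParts part s t g x =
      s ^ 2 * (∑ x, if part x then μ x * g x ^ 2 else 0) +
        t ^ 2 * ∑ x, if part x then 0 else μ x * g x ^ 2 := by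
  rw [mul_sum, mul_sum, ← sum_add_distrib]
  refine sum_congr rfl fun x _ => ?_
  cases hx : part x <;> simp [scaleParts, hx] <;> ring

lemma sum_mul_mulVec_eq_zero_of_eq_zero_on_part {P : Matrix α α ℝ}
    (hbip : ∀ x y, P x y ≠ 0 → part x ≠ part y) (μ : α → ℝ) (g : α → ℝ) (c : Bool)
    (hg : ∀ x, part x = c → g x = 0) :
    ∑ x, μ x * g x * P.mulVec g x = 0 := by
  have hscale : scaleParts part (if c then 0 else 1) (if c then 1 else 0) g = g := by
    funext x
    by_cases hx : part x = c
    · cases c <;> simp [scaleParts, hx, hg x hx]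
    · cases c <;> simp_all [scaleParts]
  rw [← hscale, sum_mul_scaleParts_mul_mulVec hbip]
  cases c <;> simp

end BipartiteScaling

lemma eq_zero_of_sum_mul_sq_eq_zero {α : Type*} {s : Finset α} {μ g : α → ℝ}
    (hμ : ∀ x ∈ s, 0 < μ x) (h : ∑ x ∈ s, μ x * g x ^ 2 = 0) {x : α} (hx : x ∈ s) :
    g x = 0 := by
  have hterm := (sum_eq_zero_iff_of_nonneg fun y hy => by
    have := hμ y hy; positivity).mp h x hx
  simpa [(hμ x hx).ne'] using hterm

lemma exists_mul_eq_one_sq_mul_add_sq_mul {a b : ℝ} (ha : 0 < a) (hb : 0 < b) :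
    ∃ s t : ℝ, s * t = 1 ∧ s ^ 2 * a + t ^ 2 * b = 2 * Real.sqrt (a * b) := by
  refine ⟨Real.sqrt (Real.sqrt b / Real.sqrt a), Real.sqrt (Real.sqrt a / Real.sqrt b), ?_, ?_⟩
  · rw [← Real.sqrt_mul (by positivity), div_mul_div_comm, mul_comm (Real.sqrt b),
      div_self (by positivity), Real.sqrt_one]
  · rw [Real.sq_sqrt (by positivity), Real.sq_sqrt (by positivity), Real.sqrt_mul ha.le,
      div_mul_eq_mul_div, div_mul_eq_mul_div, mul_div_assoc, mul_div_assoc, Real.div_sqrt,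
      Real.div_sqrt]
    ring

theorem stmt4_general {α : Type*} [Fintype α] (P : Matrix α α ℝ) (μ : α → ℝ) (part : α → Bool)
    (hμ : ∀ x, 0 < μ x)
    (hbip : ∀ x y, P x y ≠ 0 → part x ≠ part y)
    (l2 : ℝ)
    (hl2 : ∀ f : α → ℝ, (∑ x, μ x * f x) = 0 →
      (∑ x, μ x * f x * P.mulVec f x) ≤ l2 * ∑ x, μ x * f x * f x)
    (g : α → ℝ)
    (hgX : (∑ x, μ x * g x * (if part x then 1 else 0)) = 0)
    (hgY : (∑ x, μ x * g x * (if part x then 0 else 1)) = 0) :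
    (∑ x, μ x * g x * P.mulVec g x) ≤
      l2 * (2 * Real.sqrt ((∑ x, if part x then μ x * g x ^ 2 else 0) *
        (∑ x, if part x then 0 else μ x * g x ^ 2))) := by
  set a := ∑ x, if part x then μ x * g x ^ 2 else 0
  set b := ∑ x, if part x then 0 else μ x * g x ^ 2
  have ha_nonneg : 0 ≤ a := sum_nonneg fun x _ => by have := hμ x; split_ifs <;> positivity
  have hb_nonneg : 0 ≤ b := sum_nonneg fun x _ => by have := hμ x; split_ifs <;> positivity
  rcases ha_nonneg.eq_or_lt with ha | ha
  · have hg : ∀ x, part x = true → g x = 0 := fun x hx =>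
      eq_zero_of_sum_mul_sq_eq_zero (fun y _ => hμ y) (by rw [sum_filter]; exact ha.symm)
        (by simpa using hx)
    simp [sum_mul_mulVec_eq_zero_of_eq_zero_on_part hbip μ g true hg, ← ha]
  rcases hb_nonneg.eq_or_lt with hb | hb
  · have hg : ∀ x, part x = false → g x = 0 := fun x hx =>
      eq_zero_of_sum_mul_sq_eq_zero (s := {y | part y = false}) (fun y _ => hμ y)
        (by
          rw [sum_filter]
          exact (sum_congr rfl fun y _ => by cases part y <;> rfl).trans hb.symm)
        (by simpa using hx)
    simp [sum_mul_mulVec_eq_zero_of_eq_zero_on_part hbip μ g false hg, ← hb]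
  obtain ⟨s, t, hst, hab⟩ := exists_mul_eq_one_sq_mul_add_sq_mul ha hb
  have hbound := hl2 (scaleParts part s t g) (by rw [sum_mul_scaleParts, hgX, hgY]; ring)
  rwa [sum_mul_scaleParts_mul_mulVec hbip, hst, one_mul, sum_mul_scaleParts_mul_self, hab]
    at hbound

/-- Bipartite refined eigenvalue bound: if `P` is the random walk matrix of a
connected weighted bipartite graph with parts given by `part`, self-adjoint with
respect to the stationary distribution `μ`, `l2` is (an upper bound on) the second
eigenvalue of `P` in the variational sense, and `g` is orthogonal to the indicators
of both parts, then `⟨g, Pg⟩_μ ≤ l2 · 2√(⟨g_X,g_X⟩_μ ⟨g_Y,g_Y⟩_μ)`. -/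
theorem stmt4 {α : Type*} [Fintype α] (P : Matrix α α ℝ) (μ : α → ℝ) (part : α → Bool)
    (hμ : ∀ x, 0 < μ x)
    (hPnn : ∀ x y, 0 ≤ P x y)
    (hstoch : ∀ x, ∑ y, P x y = 1)
    (hbip : ∀ x y, P x y ≠ 0 → part x ≠ part y)
    (hconn : ∀ x y : α, ∃ (k : ℕ) (q : Fin (k + 1) → α), q 0 = x ∧ q (Fin.last k) = y ∧
      ∀ i : Fin k, 0 < P (q i.castSucc) (q i.succ))
    (hsa : ∀ x y, μ x * P x y = μ y * P y x)
    (l2 : ℝ)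
    (hl2 : ∀ f : α → ℝ, (∑ x, μ x * f x) = 0 →
      (∑ x, μ x * f x * P.mulVec f x) ≤ l2 * ∑ x, μ x * f x * f x)
    (g : α → ℝ)
    (hgX : (∑ x, μ x * g x * (if part x then 1 else 0)) = 0)
    (hgY : (∑ x, μ x * g x * (if part x then 0 else 1)) = 0) :
    (∑ x, μ x * g x * P.mulVec g x) ≤
      l2 * (2 * Real.sqrt ((∑ x, if part x then μ x * g x ^ 2 else 0) *
        (∑ x, if part x then 0 else μ x * g x ^ 2))) :=
  stmt4_general P μ part hμ hbip l2 hl2 g hgX hgY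
end

section
/- Let G be a weighted d-partite graph with parts T_1,…,T_d such that for every x ∈ T_i and every j ≠ i, the total edge weight from x into T_j equals d_w(x)/(d−1). Let P be the simple random walk matrix on G. For each pair i ≠ j, let P_{i,j} be the random walk on the induced bipartite graph G_{i,j} between T_i and T_j, and suppose λ₂(P_{i,j}) ≤ M(i,j) for a symmetric matrix M ∈ ℝ^{d×d} with nonnegative entries and zero diagonal. Then λ₂(P) ≤ λ_max(M)/(d−1). -/
/-!
Split `f = g + m ∘ part`, where `m` is the degree-weighted mean of `f` on each part, so that `g`
has mean zero on every part. Since every vertex sees each other part with the same weight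
`d_w(x)/(d-1)`, the walk maps part-constant functions to part-constant functions: this kills the
cross term, and gives `m ∘ part`, which is orthogonal to constants, nonpositive energy. The energy
of `g` is half the sum of its energies in the bipartite graphs `G_{i,j}`. Testing the spectral gap
of `G_{i,j}` on `g` rescaled by `u` on `T_i` and by `v` on `T_j` and optimizing over `u, v` bounds
the `(i,j)` energy by `2 M(i,j)/(d-1) · ‖g|T_i‖ ‖g|T_j‖`; summing, the quadratic form of `M` at the
vector of these norms is at most `λ_max(M) ‖g‖²`, and `‖g‖ ≤ ‖f‖`.
-/

open Finset Real

/-- The weight function of the induced bipartite graph between parts `i` and `j`. -/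
def wpair {α : Type*} {d : ℕ} (w : α → α → ℝ) (part : α → Fin d) (i j : Fin d) :
    α → α → ℝ :=
  fun x y => if (part x = i ∧ part y = j) ∨ (part x = j ∧ part y = i) then w x y else 0

theorem sub_one_pos_of_two_le {d : ℕ} (hd : 2 ≤ d) : (0 : ℝ) < d - 1 := by
  have : (2 : ℝ) ≤ d := by exact_mod_cast hd
  linarith

theorem le_two_mul_mul_sqrt_mul_sqrt_of_forall {Q a b c : ℝ} (ha : 0 ≤ a) (hb : 0 ≤ b)
    (hc : 0 ≤ c) (h : ∀ u v : ℝ, u * v * Q ≤ c * (u ^ 2 * a + v ^ 2 * b)) :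
    Q ≤ 2 * c * (√a * √b) := by
  rcases (mul_nonneg (sqrt_nonneg a) (sqrt_nonneg b)).eq_or_lt with hab | hab
  · -- if `a = 0`, testing `u = c b + 1`, `v = Q` gives `Q² ≤ 0`
    rw [← hab, mul_zero]
    rcases mul_eq_zero.1 hab.symm with ha0 | hb0
    · have := h (c * b + 1) Q
      rw [(sqrt_eq_zero ha).1 ha0] at this
      nlinarith [sq_nonneg Q]
    · have := h Q (c * a + 1)
      rw [(sqrt_eq_zero hb).1 hb0] at this
      nlinarith [sq_nonneg Q]
  · have := h √b √a
    rw [sq_sqrt ha, sq_sqrt hb] at this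
    refine le_of_mul_le_mul_left ?_ hab
    have hsq : √a * √b * (√a * √b) = a * b := by
      rw [mul_mul_mul_comm, mul_self_sqrt ha, mul_self_sqrt hb]
    nlinarith

theorem diag_le_of_forall_quadratic_le {d : ℕ} {M : Matrix (Fin d) (Fin d) ℝ} {L : ℝ}
    (hL : ∀ v : Fin d → ℝ, (∑ i, ∑ j, M i j * v i * v j) ≤ L * ∑ i, v i ^ 2) (i : Fin d) :
    M i i ≤ L := by
  simpa [Pi.single_apply] using hL (Pi.single i 1)

section PartSums

variable {α : Type*} [Fintype α] {d : ℕ} (part : α → Fin d) (μ : α → ℝ)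

def partSum (φ : α → ℝ) (k : Fin d) : ℝ := ∑ x with part x = k, μ x * φ x

noncomputable def partMean (φ : α → ℝ) (k : Fin d) : ℝ := partSum part μ φ k / partSum part μ 1 k

theorem sum_partSum (φ : α → ℝ) : ∑ k, partSum part μ φ k = ∑ x, μ x * φ x :=
  sum_fiberwise _ _ _

theorem partSum_comp_mul (F : Fin d → ℝ) (φ : α → ℝ) (k : Fin d) :
    partSum part μ (fun x => F (part x) * φ x) k = F k * partSum part μ φ k := by
  rw [partSum, partSum, mul_sum]
  refine sum_congr rfl fun x hx => ?_
  rw [(mem_filter.1 hx).2]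
  ring

theorem sum_mul_mul_comp_part (φ : α → ℝ) (F : Fin d → ℝ) :
    ∑ x, μ x * φ x * F (part x) = ∑ k, F k * partSum part μ φ k := by
  simp_rw [← partSum_comp_mul, sum_partSum]
  exact sum_congr rfl fun x _ => by ring

variable {μ}

theorem partSum_sub_partMean (hμ : ∀ x, 0 ≤ μ x) (φ : α → ℝ) (k : Fin d) :
    partSum part μ (fun x => φ x - partMean part μ φ (part x)) k = 0 := by
  have hmass : partSum part μ 1 k = 0 → partSum part μ φ k = 0 := by
    intro h
    rw [partSum, sum_eq_zero_iff_of_nonneg fun x _ => by simpa using hμ x] at h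
    exact sum_eq_zero fun x hx => by simpa using Or.inl (h x hx)
  have hsplit := partSum_comp_mul part μ (partMean part μ φ) 1 k
  simp only [Pi.one_apply, mul_one] at hsplit
  rw [partSum, sum_congr rfl fun x _ => mul_sub (μ x) _ _, sum_sub_distrib]
  rw [← partSum, ← partSum, hsplit, partMean, div_mul_cancel_of_imp hmass, sub_self]

theorem sum_mul_partMean_comp (hμ : ∀ x, 0 ≤ μ x) (φ : α → ℝ) :
    ∑ x, μ x * partMean part μ φ (part x) = ∑ x, μ x * φ x := by
  have h := sum_partSum part μ fun x => φ x - partMean part μ φ (part x)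
  simp only [partSum_sub_partMean part hμ, sum_const_zero, mul_sub, sum_sub_distrib] at h
  linarith

theorem sum_mul_sq_le_sum_mul_add_comp_part_sq (hμ : ∀ x, 0 ≤ μ x) {φ : α → ℝ}
    (hφ : ∀ k, partSum part μ φ k = 0) (F : Fin d → ℝ) :
    ∑ x, μ x * φ x ^ 2 ≤ ∑ x, μ x * (φ x + F (part x)) ^ 2 := by
  have horth : ∑ x, μ x * φ x * F (part x) = 0 := by
    simp [sum_mul_mul_comp_part, hφ]
  have hexpand : ∑ x, μ x * (φ x + F (part x)) ^ 2
      = ∑ x, μ x * φ x ^ 2 + 2 * ∑ x, μ x * φ x * F (part x) + ∑ x, μ x * F (part x) ^ 2 := by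
    rw [mul_sum, ← sum_add_distrib, ← sum_add_distrib]
    exact sum_congr rfl fun x _ => by ring
  rw [hexpand, horth]
  linarith [sum_nonneg fun x (_ : x ∈ univ) => mul_nonneg (hμ x) (sq_nonneg (F (part x)))]

end PartSums

section WeightedGraph

variable {α : Type*} {d : ℕ}

theorem sum_sum_wpair {part : α → Fin d} {w : α → α → ℝ} {x y : α}
    (h0 : part x = part y → w x y = 0) :
    ∑ i, ∑ j, wpair w part i j x y = 2 * w x y := by
  by_cases hxy : part x = part y
  · simp [wpair, h0 hxy]
  · have hsplit : ∀ i j, wpair w part i j x y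
        = (if part x = i then if part y = j then w x y else 0 else 0)
          + (if part y = i then if part x = j then w x y else 0 else 0) := by
      intro i j
      simp only [wpair]
      split_ifs <;> simp_all
    simp [hsplit, sum_add_distrib, two_mul]

variable [Fintype α]

def wdeg (w : α → α → ℝ) (x : α) : ℝ := ∑ y, w x y

def weightForm (w : α → α → ℝ) (φ ψ : α → ℝ) : ℝ := ∑ x, ∑ y, w x y * φ x * ψ y

def IsPartBalanced (part : α → Fin d) (w : α → α → ℝ) : Prop :=
  ∀ x, ∀ j, j ≠ part x → ∑ y with part y = j, w x y = wdeg w x / ((d : ℝ) - 1)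

variable {part : α → Fin d} {w : α → α → ℝ}

theorem wdeg_nonneg (hnn : ∀ x y, 0 ≤ w x y) (x : α) : 0 ≤ wdeg w x :=
  sum_nonneg fun y _ => hnn x y

theorem weightForm_comm (hsymm : ∀ x y, w x y = w y x) (φ ψ : α → ℝ) :
    weightForm w φ ψ = weightForm w ψ φ := by
  rw [weightForm, weightForm, sum_comm]
  exact sum_congr rfl fun x _ => sum_congr rfl fun y _ => by rw [hsymm]; ring

theorem weightForm_add_add (hsymm : ∀ x y, w x y = w y x) (φ ψ : α → ℝ) :
    weightForm w (fun x => φ x + ψ x) (fun x => φ x + ψ x)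
      = weightForm w φ φ + 2 * weightForm w φ ψ + weightForm w ψ ψ := by
  have hexpand : weightForm w (fun x => φ x + ψ x) (fun x => φ x + ψ x)
      = weightForm w φ φ + weightForm w φ ψ + weightForm w ψ φ + weightForm w ψ ψ := by
    simp only [weightForm, ← sum_add_distrib]
    exact sum_congr rfl fun x _ => sum_congr rfl fun y _ => by ring
  rw [hexpand, weightForm_comm hsymm ψ φ]
  ring

theorem two_mul_weightForm_eq_sum_wpair (h0 : ∀ x y, part x = part y → w x y = 0)
    (φ ψ : α → ℝ) :
    2 * weightForm w φ ψ = ∑ i, ∑ j, weightForm (wpair w part i j) φ ψ := by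
  calc 2 * weightForm w φ ψ
      = ∑ x, ∑ y, ∑ i, ∑ j, wpair w part i j x y * φ x * ψ y := by
        simp only [weightForm, mul_sum, ← sum_mul, sum_sum_wpair (h0 _ _)]
        exact sum_congr rfl fun x _ => sum_congr rfl fun y _ => by ring
    _ = ∑ x, ∑ i, ∑ j, ∑ y, wpair w part i j x y * φ x * ψ y :=
        sum_congr rfl fun x _ => Finset.sum_comm_cycle.symm
    _ = ∑ i, ∑ j, weightForm (wpair w part i j) φ ψ := Finset.sum_comm_cycle.symm

theorem weightForm_wpair_self (h0 : ∀ x y, part x = part y → w x y = 0) (i : Fin d)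
    (φ ψ : α → ℝ) : weightForm (wpair w part i i) φ ψ = 0 :=
  sum_eq_zero fun x _ => sum_eq_zero fun y _ => by
    simp only [wpair, or_self]
    split_ifs with h
    · rw [h0 x y (h.1.trans h.2.symm)]; ring
    · ring

theorem weightForm_wpair_comp_mul (c : Fin d → ℝ) (i j : Fin d) (φ ψ : α → ℝ) :
    weightForm (wpair w part i j) (fun x => c (part x) * φ x) (fun y => c (part y) * ψ y)
      = c i * c j * weightForm (wpair w part i j) φ ψ := by
  simp only [weightForm, mul_sum]
  refine sum_congr rfl fun x _ => sum_congr rfl fun y _ => ?_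
  simp only [wpair]
  split_ifs with h
  · rcases h with ⟨hx, hy⟩ | ⟨hx, hy⟩ <;> rw [hx, hy] <;> ring
  · ring

namespace IsPartBalanced

theorem sum_filter_part_self (hw : IsPartBalanced part w) (hd : 2 ≤ d) (x : α) :
    ∑ y with part y = part x, w x y = 0 := by
  -- the other `d - 1` parts already carry the whole degree
  have htot := sum_fiberwise univ part (w x)
  rw [← add_sum_erase _ _ (mem_univ (part x)),
    sum_congr rfl fun j hj => hw x j (ne_of_mem_erase hj), sum_const,
    card_erase_of_mem (mem_univ _), card_univ, Fintype.card_fin, nsmul_eq_mul,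
    Nat.cast_sub (by omega), Nat.cast_one, mul_div_cancel₀ _ (sub_one_pos_of_two_le hd).ne'] at htot
  exact add_eq_right.1 htot

theorem weight_eq_zero_of_part_eq (hw : IsPartBalanced part w) (hd : 2 ≤ d)
    (hnn : ∀ x y, 0 ≤ w x y) {x y : α} (h : part x = part y) : w x y = 0 :=
  (sum_eq_zero_iff_of_nonneg fun z _ => hnn x z).1 (hw.sum_filter_part_self hd x) y
    (by simp [h])

theorem sum_filter_part (hw : IsPartBalanced part w) (hd : 2 ≤ d) (x : α) (j : Fin d) :
    ∑ y with part y = j, w x y = if j = part x then 0 else wdeg w x / ((d : ℝ) - 1) := by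
  split_ifs with hj
  · exact hj ▸ hw.sum_filter_part_self hd x
  · exact hw x j hj

theorem sum_mul_comp_part (hw : IsPartBalanced part w) (hd : 2 ≤ d) (x : α)
    (F : Fin d → ℝ) :
    ∑ y, w x y * F (part y) = wdeg w x * (∑ j, F j - F (part x)) / ((d : ℝ) - 1) := by
  have hfiber : ∀ j, ∑ y with part y = j, w x y * F (part y)
      = F j * (wdeg w x / ((d : ℝ) - 1)) - if j = part x then F j * (wdeg w x / ((d : ℝ) - 1))
        else 0 := by
    intro j
    rw [sum_congr rfl fun y hy => by rw [(mem_filter.1 hy).2], ← sum_mul,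
      hw.sum_filter_part hd x j]
    split_ifs <;> ring
  rw [← sum_fiberwise univ part, sum_congr rfl fun j _ => hfiber j, sum_sub_distrib,
    sum_ite_eq', if_pos (mem_univ _), ← sum_mul]
  ring

theorem weightForm_comp_part_right (hw : IsPartBalanced part w) (hd : 2 ≤ d) (φ : α → ℝ)
    (F : Fin d → ℝ) :
    weightForm w φ (fun y => F (part y))
      = ((∑ j, F j) * ∑ k, partSum part (wdeg w) φ k
          - ∑ k, F k * partSum part (wdeg w) φ k) / ((d : ℝ) - 1) := by
  rw [sum_partSum, ← sum_mul_mul_comp_part, mul_sum, ← sum_sub_distrib, sum_div, weightForm]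
  refine sum_congr rfl fun x _ => ?_
  have hrow : ∑ y, w x y * φ x * F (part y) = φ x * ∑ y, w x y * F (part y) := by
    rw [mul_sum]
    exact sum_congr rfl fun y _ => by ring
  rw [hrow, hw.sum_mul_comp_part hd]
  ring

theorem weightForm_comp_part_eq_zero (hw : IsPartBalanced part w) (hd : 2 ≤ d) {φ : α → ℝ}
    (hφ : ∀ k, partSum part (wdeg w) φ k = 0) (F : Fin d → ℝ) :
    weightForm w φ (fun y => F (part y)) = 0 := by
  simp [hw.weightForm_comp_part_right hd, hφ]

theorem weightForm_comp_part_self_nonpos (hw : IsPartBalanced part w) (hd : 2 ≤ d)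
    (hnn : ∀ x y, 0 ≤ w x y) {F : Fin d → ℝ} (hF : ∑ x, wdeg w x * F (part x) = 0) :
    weightForm w (fun x => F (part x)) (fun y => F (part y)) ≤ 0 := by
  have hd1 : (0 : ℝ) < d - 1 := sub_one_pos_of_two_le hd
  have hmass : 0 ≤ ∑ k, F k * partSum part (wdeg w) (fun x => F (part x)) k := by
    rw [← sum_mul_mul_comp_part]
    exact sum_nonneg fun x _ => by nlinarith [wdeg_nonneg hnn x, sq_nonneg (F (part x))]
  rw [hw.weightForm_comp_part_right hd, sum_partSum, hF, mul_zero, zero_sub]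
  exact div_nonpos_of_nonpos_of_nonneg (neg_nonpos.2 hmass) hd1.le

theorem wdeg_wpair (hw : IsPartBalanced part w) {i j : Fin d} (hij : i ≠ j) (x : α) :
    wdeg (wpair w part i j) x
      = if part x = i ∨ part x = j then wdeg w x / ((d : ℝ) - 1) else 0 := by
  by_cases hxi : part x = i
  · rw [if_pos (Or.inl hxi), ← hw x j (hxi ▸ hij.symm), wdeg, sum_filter]
    exact sum_congr rfl fun y _ => by simp [wpair, hxi, hij]
  by_cases hxj : part x = j
  · rw [if_pos (Or.inr hxj), ← hw x i (hxj ▸ hij), wdeg, sum_filter]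
    exact sum_congr rfl fun y _ => by simp [wpair, hxj, hij.symm]
  · rw [if_neg (by tauto), wdeg]
    exact sum_eq_zero fun y _ => by simp [wpair, hxi, hxj]

theorem sum_wdeg_wpair_mul (hw : IsPartBalanced part w) {i j : Fin d} (hij : i ≠ j)
    (φ : α → ℝ) :
    ∑ x, wdeg (wpair w part i j) x * φ x
      = (partSum part (wdeg w) φ i + partSum part (wdeg w) φ j) / ((d : ℝ) - 1) := by
  let c : ℝ := 1 / ((d : ℝ) - 1)
  let F : Fin d → ℝ := fun k => (if k = i then c else 0) + if k = j then c else 0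
  have hF : ∀ x, wdeg (wpair w part i j) x * φ x = wdeg w x * φ x * F (part x) := by
    intro x
    rw [hw.wdeg_wpair hij]
    by_cases hxi : part x = i
    · simp [F, c, hxi, hij]
      ring
    · by_cases hxj : part x = j
      · simp [F, c, hxj, hij.symm]
        ring
      · simp [F, c, hxi, hxj]
  rw [sum_congr rfl fun x _ => hF x, sum_mul_mul_comp_part]
  simp only [F, add_mul, sum_add_distrib, ite_mul, zero_mul, sum_ite_eq', mem_univ, if_true]
  ring

theorem weightForm_wpair_le (hw : IsPartBalanced part w) (hd : 2 ≤ d)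
    (hnn : ∀ x y, 0 ≤ w x y) {i j : Fin d} (hij : i ≠ j) {c : ℝ} (hc : 0 ≤ c)
    (hgap : ∀ f : α → ℝ, ∑ x, wdeg (wpair w part i j) x * f x = 0 →
      weightForm (wpair w part i j) f f ≤ c * ∑ x, wdeg (wpair w part i j) x * f x ^ 2)
    {g : α → ℝ} (hg : ∀ k, partSum part (wdeg w) g k = 0) :
    weightForm (wpair w part i j) g g
      ≤ 2 * (c / ((d : ℝ) - 1)) * (√(partSum part (wdeg w) (fun x => g x ^ 2) i)
          * √(partSum part (wdeg w) (fun x => g x ^ 2) j)) := by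
  have hd1 : (0 : ℝ) < d - 1 := sub_one_pos_of_two_le hd
  have hB : ∀ k, 0 ≤ partSum part (wdeg w) (fun x => g x ^ 2) k := fun k =>
    sum_nonneg fun x _ => mul_nonneg (wdeg_nonneg hnn x) (sq_nonneg _)
  refine le_two_mul_mul_sqrt_mul_sqrt_of_forall (hB i) (hB j) (div_nonneg hc hd1.le) ?_
  intro u v
  -- test `hgap` on `g` rescaled by `u` on part `i` and by `v` on part `j`
  let s : Fin d → ℝ := fun k => if k = i then u else v
  have hsq : ∀ x, (s (part x) * g x) ^ 2 = s (part x) ^ 2 * g x ^ 2 := fun x => mul_pow _ _ _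
  have horth : ∑ x, wdeg (wpair w part i j) x * (s (part x) * g x) = 0 := by
    rw [hw.sum_wdeg_wpair_mul hij, partSum_comp_mul, partSum_comp_mul, hg, hg]
    simp
  have := hgap _ horth
  rw [weightForm_wpair_comp_mul, hw.sum_wdeg_wpair_mul hij, funext hsq,
    partSum_comp_mul part _ (fun k => s k ^ 2), partSum_comp_mul part _ (fun k => s k ^ 2)] at this
  simp only [s, if_pos rfl, if_neg hij.symm] at this
  calc u * v * weightForm (wpair w part i j) g g
      ≤ c * ((u ^ 2 * partSum part (wdeg w) (fun x => g x ^ 2) i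
          + v ^ 2 * partSum part (wdeg w) (fun x => g x ^ 2) j) / ((d : ℝ) - 1)) := this
    _ = _ := by ring

theorem weightForm_le_of_partSum_eq_zero (hw : IsPartBalanced part w) (hd : 2 ≤ d)
    (hnn : ∀ x y, 0 ≤ w x y) {M : Matrix (Fin d) (Fin d) ℝ} (hMnn : ∀ i j, 0 ≤ M i j)
    (hM : ∀ i j : Fin d, i ≠ j → ∀ f : α → ℝ,
      ∑ x, wdeg (wpair w part i j) x * f x = 0 →
      weightForm (wpair w part i j) f f ≤ M i j * ∑ x, wdeg (wpair w part i j) x * f x ^ 2)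
    {L : ℝ} (hL : ∀ v : Fin d → ℝ, (∑ i, ∑ j, M i j * v i * v j) ≤ L * ∑ i, v i ^ 2)
    {g : α → ℝ} (hg : ∀ k, partSum part (wdeg w) g k = 0) :
    weightForm w g g ≤ L / ((d : ℝ) - 1) * ∑ x, wdeg w x * g x ^ 2 := by
  have hd1 : (0 : ℝ) < d - 1 := sub_one_pos_of_two_le hd
  have h0 : ∀ x y, part x = part y → w x y = 0 := fun x y =>
    hw.weight_eq_zero_of_part_eq hd hnn
  set B : Fin d → ℝ := partSum part (wdeg w) (fun x => g x ^ 2)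
  have hB : ∀ k, √(B k) ^ 2 = B k := fun k =>
    sq_sqrt (sum_nonneg fun x _ => mul_nonneg (wdeg_nonneg hnn x) (sq_nonneg _))
  have hpair : ∀ i j, weightForm (wpair w part i j) g g
      ≤ 2 / ((d : ℝ) - 1) * (M i j * √(B i) * √(B j)) := by
    intro i j
    rcases eq_or_ne i j with rfl | hij
    · rw [weightForm_wpair_self h0]
      have hMii := hMnn i i
      positivity
    · refine (hw.weightForm_wpair_le hd hnn hij (hMnn i j) (hM i j hij) hg).trans_eq ?_
      ring
  have := hL fun k => √(B k)
  simp only [hB, B, sum_partSum] at this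
  refine le_of_mul_le_mul_left ?_ (two_pos : (0 : ℝ) < 2)
  calc 2 * weightForm w g g
      = ∑ i, ∑ j, weightForm (wpair w part i j) g g := two_mul_weightForm_eq_sum_wpair h0 g g
    _ ≤ 2 / ((d : ℝ) - 1) * ∑ i, ∑ j, M i j * √(B i) * √(B j) := by
        simp only [mul_sum]
        exact sum_le_sum fun i _ => sum_le_sum fun j _ => hpair i j
    _ ≤ 2 / ((d : ℝ) - 1) * (L * ∑ x, wdeg w x * g x ^ 2) := by gcongr
    _ = 2 * (L / ((d : ℝ) - 1) * ∑ x, wdeg w x * g x ^ 2) := by ring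

end IsPartBalanced

end WeightedGraph

theorem stmt6_general {α : Type*} [Fintype α] {d : ℕ} (hd : 2 ≤ d)
    (part : α → Fin d) (w : α → α → ℝ)
    (hsymm : ∀ x y, w x y = w y x) (hnn : ∀ x y, 0 ≤ w x y)
    (hpartite : ∀ x, ∀ j, j ≠ part x →
      (∑ y ∈ Finset.univ.filter (fun y => part y = j), w x y) = (∑ y, w x y) / ((d : ℝ) - 1))
    (M : Matrix (Fin d) (Fin d) ℝ)
    (hMnn : ∀ i j, 0 ≤ M i j)
    (hM : ∀ i j : Fin d, i ≠ j → ∀ f : α → ℝ,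
      (∑ x, (∑ y, wpair w part i j x y) * f x) = 0 →
      (∑ x, ∑ y, wpair w part i j x y * f x * f y) ≤
        M i j * ∑ x, (∑ y, wpair w part i j x y) * f x ^ 2)
    (L : ℝ)
    (hL : ∀ v : Fin d → ℝ, (∑ i, ∑ j, M i j * v i * v j) ≤ L * ∑ i, v i ^ 2) :
    ∀ f : α → ℝ, (∑ x, (∑ y, w x y) * f x) = 0 →
      (∑ x, ∑ y, w x y * f x * f y) ≤ (L / ((d : ℝ) - 1)) * ∑ x, (∑ y, w x y) * f x ^ 2 := by
  intro f hf
  change weightForm w f f ≤ L / ((d : ℝ) - 1) * ∑ x, wdeg w x * f x ^ 2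
  have hw : IsPartBalanced part w := hpartite
  have hdeg : ∀ x, 0 ≤ wdeg w x := wdeg_nonneg hnn
  set m := partMean part (wdeg w) f
  set g : α → ℝ := fun x => f x - m (part x)
  have hg : ∀ k, partSum part (wdeg w) g k = 0 := partSum_sub_partMean part hdeg f
  have hfg : f = fun x => g x + m (part x) := funext fun x => (sub_add_cancel _ _).symm
  have hm : ∑ x, wdeg w x * m (part x) = 0 := (sum_mul_partMean_comp part hdeg f).trans hf
  have hL0 : 0 ≤ L / ((d : ℝ) - 1) :=
    div_nonneg ((hMnn ⟨0, by omega⟩ _).trans (diag_le_of_forall_quadratic_le hL _))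
      (sub_one_pos_of_two_le hd).le
  calc weightForm w f f
      = weightForm w g g + 2 * weightForm w g (fun y => m (part y))
          + weightForm w (fun x => m (part x)) (fun y => m (part y)) := by
        rw [hfg, weightForm_add_add hsymm]
    _ ≤ weightForm w g g := by
        rw [hw.weightForm_comp_part_eq_zero hd hg]
        linarith [hw.weightForm_comp_part_self_nonpos hd hnn hm]
    _ ≤ L / ((d : ℝ) - 1) * ∑ x, wdeg w x * g x ^ 2 :=
        hw.weightForm_le_of_partSum_eq_zero hd hnn hMnn hM hL hg
    _ ≤ L / ((d : ℝ) - 1) * ∑ x, wdeg w x * f x ^ 2 := by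
        refine mul_le_mul_of_nonneg_left ?_ hL0
        exact (sum_mul_sq_le_sum_mul_add_comp_part_sq part hdeg hg m).trans_eq (by simp [g])

/-- If `G` is a weighted `d`-partite graph in which every vertex sends a `1/(d-1)`
fraction of its weighted degree to each other part, the second eigenvalue of the
induced bipartite walk between parts `i` and `j` is at most `M i j` (expressed
variationally: for every test function orthogonal to constants in the bipartite
stationary inner product, the Rayleigh quotient is at most `M i j`), and `L` is an
upper bound for `λ_max(M)` (variationally), then the second eigenvalue of the full
random walk is at most `L/(d-1)` (again expressed via the Rayleigh quotient on the
orthogonal complement of constants in the stationary inner product). -/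
theorem stmt6 {α : Type*} [Fintype α] {d : ℕ} (hd : 2 ≤ d)
    (part : α → Fin d) (w : α → α → ℝ)
    (hsymm : ∀ x y, w x y = w y x) (hnn : ∀ x y, 0 ≤ w x y)
    (hdeg : ∀ x, 0 < ∑ y, w x y)
    (hpartite : ∀ x, ∀ j, j ≠ part x →
      (∑ y ∈ Finset.univ.filter (fun y => part y = j), w x y) = (∑ y, w x y) / ((d : ℝ) - 1))
    (M : Matrix (Fin d) (Fin d) ℝ)
    (hMsymm : ∀ i j, M i j = M j i) (hMnn : ∀ i j, 0 ≤ M i j)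
    (hMdiag : ∀ i, M i i = 0)
    (hM : ∀ i j : Fin d, i ≠ j → ∀ f : α → ℝ,
      (∑ x, (∑ y, wpair w part i j x y) * f x) = 0 →
      (∑ x, ∑ y, wpair w part i j x y * f x * f y) ≤
        M i j * ∑ x, (∑ y, wpair w part i j x y) * f x ^ 2)
    (L : ℝ)
    (hL : ∀ v : Fin d → ℝ, (∑ i, ∑ j, M i j * v i * v j) ≤ L * ∑ i, v i ^ 2) :
    ∀ f : α → ℝ, (∑ x, (∑ y, w x y) * f x) = 0 →
      (∑ x, ∑ y, w x y * f x * f y) ≤ (L / ((d : ℝ) - 1)) * ∑ x, (∑ y, w x y) * f x ^ 2 :=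
  stmt6_general hd part w hsymm hnn hpartite M hMnn hM L hL
end

section
/- Let P = [[0, A],[B, 0]] be a real matrix with constant row sums a, where A is m×n and B is n×m. If λ is an eigenvalue of P other than ±a, then |λ| ≤ (1/2)·sqrt( (max_{i,j≤m} Σ_s |a_{is} − a_{js}|) · (max_{i,j≤n} Σ_s |b_{is} − b_{js}|) ). -/
/-!
Dobrushin's argument: if two rows `M i`, `M j` have the same sum, then
`∑ s, (M i s - M j s) • z s` splits into a positive and a negative part of equal mass
`½ ∑ s, |M i s - M j s|`, so its norm is at most that mass times the diameter of `z`.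
For an eigenvector `(x, y)` of `[[0, A], [B, 0]]` we have `A y = λ x` and `B x = λ y`, hence
`|λ| diam x ≤ (δ_A / 2) diam y` and `|λ| diam y ≤ (δ_B / 2) diam x`, and multiplying gives
`|λ|² ≤ δ_A δ_B / 4` (with `δ = rowL1Diam`) as soon as `diam x > 0`. A constant `x` would
force `λ² = a²` or `(x, y) = 0`.
-/

open Finset

section ZeroSumCombination

variable {ι E : Type*} [Fintype ι] [SeminormedAddCommGroup E] [NormedSpace ℝ E]

lemma sum_negPart_eq_sum_posPart {c : ι → ℝ} (hc : ∑ s, c s = 0) :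
    ∑ s, (c s)⁻ = ∑ s, (c s)⁺ := by
  have h : ∑ s, ((c s)⁺ - (c s)⁻) = 0 := by simpa only [posPart_sub_negPart] using hc
  rw [sum_sub_distrib, sub_eq_zero] at h
  exact h.symm

lemma sum_posPart_smul_sum_eq (c : ι → ℝ) (z : ι → E) (hc : ∑ s, c s = 0) :
    (∑ s, (c s)⁺) • ∑ s, c s • z s = ∑ s, ∑ t, ((c s)⁺ * (c t)⁻) • (z s - z t) := by
  have hsplit : ∑ s, c s • z s = ∑ s, (c s)⁺ • z s - ∑ t, (c t)⁻ • z t := by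
    simp only [← sum_sub_distrib, ← sub_smul, posPart_sub_negPart]
  have hfirst : (∑ s, (c s)⁺) • ∑ s, (c s)⁺ • z s = ∑ s, ∑ t, ((c s)⁺ * (c t)⁻) • z s := by
    rw [← sum_negPart_eq_sum_posPart hc, smul_sum]
    refine sum_congr rfl fun s _ => ?_
    rw [← sum_smul, ← mul_sum, smul_smul, mul_comm]
  have hsecond : (∑ s, (c s)⁺) • ∑ t, (c t)⁻ • z t = ∑ s, ∑ t, ((c s)⁺ * (c t)⁻) • z t := by
    rw [sum_smul]
    refine sum_congr rfl fun s _ => ?_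
    simp only [smul_sum, smul_smul]
  rw [hsplit, smul_sub, hfirst, hsecond]
  simp only [← sum_sub_distrib, smul_sub]

lemma norm_sum_smul_le_of_sum_eq_zero (c : ι → ℝ) (z : ι → E) (hc : ∑ s, c s = 0) {D : ℝ}
    (hD : ∀ s t, ‖z s - z t‖ ≤ D) : ‖∑ s, c s • z s‖ ≤ (∑ s, |c s|) / 2 * D := by
  set S := ∑ s, (c s)⁺
  have hpm : ∑ t, (c t)⁻ = S := sum_negPart_eq_sum_posPart hc
  have habs : (∑ s, |c s|) / 2 = S := by
    simp only [← posPart_add_negPart, sum_add_distrib, hpm]; ring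
  rw [habs]
  obtain hS0 | hSpos := (sum_nonneg fun s _ => posPart_nonneg (c s) : 0 ≤ S).eq_or_lt
  · have hc0 : ∀ s, c s = 0 := fun s => abs_eq_zero.mp <|
      (sum_eq_zero_iff_of_nonneg fun s _ => abs_nonneg (c s)).mp (by linarith) s (mem_univ s)
    rw [show S = 0 from hS0.symm, zero_mul]
    simp [hc0]
  have hbound : S * ‖∑ s, c s • z s‖ ≤ S * (S * D) := calc
    S * ‖∑ s, c s • z s‖ = ‖∑ s, ∑ t, ((c s)⁺ * (c t)⁻) • (z s - z t)‖ := by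
      rw [← sum_posPart_smul_sum_eq c z hc, norm_smul, Real.norm_of_nonneg hSpos.le]
    _ ≤ ∑ s, ∑ t, (c s)⁺ * (c t)⁻ * D := by
      refine (norm_sum_le _ _).trans (sum_le_sum fun s _ => (norm_sum_le _ _).trans
        (sum_le_sum fun t _ => ?_))
      have hst : 0 ≤ (c s)⁺ * (c t)⁻ := mul_nonneg (posPart_nonneg _) (negPart_nonneg _)
      rw [norm_smul, Real.norm_of_nonneg hst]
      exact mul_le_mul_of_nonneg_left (hD s t) hst
    _ = S * (S * D) := by simp only [← sum_mul, ← mul_sum, hpm]; ring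
  exact le_of_mul_le_mul_left hbound hSpos

end ZeroSumCombination

open Set Metric Matrix

namespace Matrix

variable {ι κ : Type*} [Fintype κ]

noncomputable def rowL1Diam (M : Matrix ι κ ℝ) : ℝ := ⨆ p : ι × ι, ∑ s, |M p.1 s - M p.2 s|

lemma rowL1Diam_nonneg (M : Matrix ι κ ℝ) : 0 ≤ M.rowL1Diam :=
  Real.iSup_nonneg fun _ => sum_nonneg fun _ _ => abs_nonneg _

lemma sum_abs_sub_le_rowL1Diam [Finite ι] (M : Matrix ι κ ℝ) (i j : ι) :
    ∑ s, |M i s - M j s| ≤ M.rowL1Diam :=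
  le_ciSup (f := fun p : ι × ι => ∑ s, |M p.1 s - M p.2 s|) (finite_range _).bddAbove (i, j)

lemma diam_range_sum_smul_le_rowL1Diam [Finite ι] {E : Type*} [SeminormedAddCommGroup E]
    [NormedSpace ℝ E] {r : ℝ} (M : Matrix ι κ ℝ) (hM : ∀ i, ∑ s, M i s = r) (z : κ → E) :
    diam (range fun i => ∑ s, M i s • z s) ≤ M.rowL1Diam / 2 * diam (range z) := by
  have hz : Bornology.IsBounded (range z) := (finite_range z).isBounded
  refine diam_le_of_forall_dist_le (by positivity [M.rowL1Diam_nonneg]) ?_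
  rintro _ ⟨i, rfl⟩ _ ⟨j, rfl⟩
  have hsum : ∑ s, (M i s - M j s) = 0 := by rw [sum_sub_distrib, hM i, hM j, sub_self]
  rw [dist_eq_norm, ← sum_sub_distrib]
  simp only [← sub_smul]
  calc ‖∑ s, (M i s - M j s) • z s‖ ≤ (∑ s, |M i s - M j s|) / 2 * diam (range z) :=
        norm_sum_smul_le_of_sum_eq_zero _ z hsum fun s t =>
          (dist_eq_norm (z s) (z t)).symm.trans_le
            (dist_le_diam_of_mem hz (mem_range_self s) (mem_range_self t))
    _ ≤ M.rowL1Diam / 2 * diam (range z) := by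
        gcongr
        exact M.sum_abs_sub_le_rowL1Diam i j

lemma map_ofReal_mulVec_apply (M : Matrix ι κ ℝ) (z : κ → ℂ) (i : ι) :
    (M.map Complex.ofReal *ᵥ z) i = ∑ s, M i s • z s := by
  simp [mulVec, dotProduct, Complex.real_smul]

end Matrix

lemma exists_ne_zero_of_mem_spectrum_fromBlocks {K ι κ : Type*} [Field K] [Fintype ι] [Fintype κ]
    [DecidableEq ι] [DecidableEq κ] {A : Matrix ι κ K} {B : Matrix κ ι K} {μ : K}
    (h : μ ∈ spectrum K (fromBlocks 0 A B 0)) :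
    ∃ x y, (x ≠ 0 ∨ y ≠ 0) ∧ A *ᵥ y = μ • x ∧ B *ᵥ x = μ • y := by
  rw [← spectrum_toLin', ← Module.End.hasEigenvalue_iff_mem_spectrum] at h
  obtain ⟨v, hv⟩ := h.exists_hasEigenvector
  have hMv := hv.apply_eq_smul
  rw [toLin'_apply, fromBlocks_mulVec] at hMv
  refine ⟨v ∘ Sum.inl, v ∘ Sum.inr, ?_, ?_, ?_⟩
  · by_contra! h0
    exact hv.2 (funext fun | .inl i => congrFun h0.1 i | .inr j => congrFun h0.2 j)
  · funext i; simpa using congrFun hMv (.inl i)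
  · funext j; simpa using congrFun hMv (.inr j)

lemma exists_apply_ne_of_eigenvector_fromBlocks {ι κ : Type*} [Fintype ι] [Fintype κ] [Nonempty ι]
    {A : Matrix ι κ ℝ} {B : Matrix κ ι ℝ} {a : ℝ}
    (hA : ∀ i, ∑ s, A i s = a) (hB : ∀ j, ∑ s, B j s = a) {μ : ℂ} {x : ι → ℂ} {y : κ → ℂ}
    (hxy : x ≠ 0 ∨ y ≠ 0) (hx : ∀ i, ∑ s, A i s • y s = μ • x i)
    (hy : ∀ j, ∑ s, B j s • x s = μ • y j) (h0 : μ ≠ 0) (h1 : μ ≠ a) (h2 : μ ≠ -a) :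
    ∃ i j, x i ≠ x j := by
  by_contra! hconst
  obtain ⟨i0⟩ := ‹Nonempty ι›
  have hyc : ∀ j, μ • y j = a • x i0 := by
    intro j
    rw [← hy j]
    simp only [hconst _ i0, ← sum_smul, hB j]
  have hsq : (μ - a) * (μ + a) * x i0 = 0 := by
    have : μ * (μ * x i0) = a * (a * x i0) := calc
      μ * (μ * x i0) = ∑ s, A i0 s • (μ • y s) := by
        simp only [← smul_eq_mul, ← hx i0, smul_sum, smul_comm μ]
      _ = a * (a * x i0) := by
        simp only [hyc]
        rw [← sum_smul, hA i0, Complex.real_smul, Complex.real_smul]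
    linear_combination this
  have hc : x i0 = 0 := by
    rcases mul_eq_zero.mp hsq with h | h
    · rcases mul_eq_zero.mp h with h | h
      · exact absurd (sub_eq_zero.mp h) h1
      · exact absurd (eq_neg_of_add_eq_zero_left h) h2
    · exact h
  refine hxy.elim (fun hx0 => hx0 ?_) (fun hy0 => hy0 ?_)
  · funext i
    exact (hconst i i0).trans hc
  · funext j
    simpa [hc, h0] using hyc j

lemma sq_le_mul_of_mul_le_mul {L X Y α β : ℝ} (hL : 0 ≤ L) (hX : 0 < X) (hα : 0 ≤ α)
    (hXY : L * X ≤ α * Y) (hYX : L * Y ≤ β * X) : L ^ 2 ≤ α * β := by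
  have : L ^ 2 * X ≤ α * β * X := calc
    L ^ 2 * X = L * (L * X) := by ring
    _ ≤ L * (α * Y) := mul_le_mul_of_nonneg_left hXY hL
    _ = α * (L * Y) := by ring
    _ ≤ α * (β * X) := mul_le_mul_of_nonneg_left hYX hα
    _ = α * β * X := by ring
  exact le_of_mul_le_mul_right this hX

lemma norm_mul_diam_range_le_rowL1Diam {ι κ : Type*} [Fintype ι] [Fintype κ] {r : ℝ}
    (M : Matrix ι κ ℝ) (hM : ∀ i, ∑ s, M i s = r) {μ : ℂ} {u : ι → ℂ} {v : κ → ℂ}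
    (huv : ∀ i, ∑ s, M i s • v s = μ • u i) :
    ‖μ‖ * diam (range u) ≤ M.rowL1Diam / 2 * diam (range v) := by
  rw [← diam_smul₀, ← range_smul]
  simpa only [huv] using M.diam_range_sum_smul_le_rowL1Diam hM v

theorem stmt12_general {m n : ℕ} (hm : 0 < m)
    (A : Matrix (Fin m) (Fin n) ℝ) (B : Matrix (Fin n) (Fin m) ℝ) (a : ℝ)
    (hA : ∀ i, ∑ s, A i s = a) (hB : ∀ i, ∑ s, B i s = a)
    (lam : ℂ)
    (hlam : lam ∈ spectrum ℂ ((Matrix.fromBlocks 0 A B 0).map Complex.ofReal))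
    (h1 : lam ≠ (a : ℂ)) (h2 : lam ≠ -(a : ℂ)) :
    ‖lam‖ ≤ (1 / 2) * Real.sqrt
      ((⨆ p : Fin m × Fin m, ∑ s, |A p.1 s - A p.2 s|) *
        (⨆ p : Fin n × Fin n, ∑ s, |B p.1 s - B p.2 s|)) := by
  rw [fromBlocks_map, Matrix.map_zero _ rfl, Matrix.map_zero _ rfl] at hlam
  obtain ⟨x, y, hxy, hAy, hBx⟩ := exists_ne_zero_of_mem_spectrum_fromBlocks hlam
  have hx : ∀ i, ∑ s, A i s • y s = lam • x i := fun i => by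
    rw [← A.map_ofReal_mulVec_apply, hAy, Pi.smul_apply]
  have hy : ∀ j, ∑ s, B j s • x s = lam • y j := fun j => by
    rw [← B.map_ofReal_mulVec_apply, hBx, Pi.smul_apply]
  obtain rfl | h0 := eq_or_ne lam 0
  · rw [norm_zero]; positivity
  have : Nonempty (Fin m) := ⟨⟨0, hm⟩⟩
  obtain ⟨i, j, hij⟩ := exists_apply_ne_of_eigenvector_fromBlocks hA hB hxy hx hy h0 h1 h2
  have hxpos : 0 < diam (range x) :=
    diam_pos ⟨x i, mem_range_self i, x j, mem_range_self j, hij⟩ (finite_range x).isBounded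
  have hL := sq_le_mul_of_mul_le_mul (norm_nonneg lam) hxpos (by positivity [A.rowL1Diam_nonneg])
    (norm_mul_diam_range_le_rowL1Diam A hA hx) (norm_mul_diam_range_le_rowL1Diam B hB hy)
  have h2L : |2 * ‖lam‖| ≤ √(A.rowL1Diam * B.rowL1Diam) := Real.abs_le_sqrt (by linarith)
  rw [abs_of_nonneg (by positivity)] at h2L
  change ‖lam‖ ≤ 1 / 2 * √(A.rowL1Diam * B.rowL1Diam)
  linarith

/-- Bipartite Dobrushin-type eigenvalue bound: if `P = [[0, A], [B, 0]]` has
constant row sums `a` and `λ` is a (complex) eigenvalue of `P` other than `±a`,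
then `|λ| ≤ (1/2)·√((max_{i,j} Σ_s |a_{is}-a_{js}|)·(max_{i,j} Σ_s |b_{is}-b_{js}|))`. -/
theorem stmt12 {m n : ℕ} (hm : 0 < m) (hn : 0 < n)
    (A : Matrix (Fin m) (Fin n) ℝ) (B : Matrix (Fin n) (Fin m) ℝ) (a : ℝ)
    (hA : ∀ i, ∑ s, A i s = a) (hB : ∀ i, ∑ s, B i s = a)
    (lam : ℂ)
    (hlam : lam ∈ spectrum ℂ ((Matrix.fromBlocks 0 A B 0).map Complex.ofReal))
    (h1 : lam ≠ (a : ℂ)) (h2 : lam ≠ -(a : ℂ)) :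
    ‖lam‖ ≤ (1 / 2) * Real.sqrt
      ((⨆ p : Fin m × Fin m, ∑ s, |A p.1 s - A p.2 s|) *
        (⨆ p : Fin n × Fin n, ∑ s, |B p.1 s - B p.2 s|)) :=
  stmt12_general hm A B a hA hB lam hlam h1 h2
end

section
/- Suppose δ ∈ ℝ^n with n ≥ 2, δᵀ1 = 0, and δ ≠ 0. Then there is a set S of ordered pairs (i,j), 1 ≤ i,j ≤ n, and positive reals η_{ij} with Σ_{(i,j)∈S} η_{ij} = ‖δ‖₁, such that δ = Σ_{(i,j)∈S} (η_{ij}/2)·(e_i − e_j), where e_i is the i-th standard basis vector. -/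
/-!
Write `δ = δ⁺ - δ⁻`. Since `∑ δ = 0`, both parts have the same mass `T = ‖δ‖₁ / 2`, and
`T > 0` because `δ ≠ 0`. The product coupling `η i j = 2 δᵢ⁺ δⱼ⁻ / T` has marginals `2 δ⁺` and
`2 δ⁻`, so its total mass is `2T = ‖δ‖₁` and `∑ (η i j / 2) (eᵢ - eⱼ) = δ⁺ - δ⁻ = δ`; take for
`S` the support of `η`.
-/

open Finset

section

variable {ι : Type*} [Fintype ι]

lemma sum_posPart_eq_sum_negPart {δ : ι → ℝ} (hsum : ∑ i, δ i = 0) :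
    ∑ i, (δ i)⁺ = ∑ i, (δ i)⁻ := by
  rw [← sub_eq_zero, ← sum_sub_distrib, ← hsum]
  exact sum_congr rfl fun i _ => posPart_sub_negPart (δ i)

lemma sum_abs_eq_two_mul_sum_posPart {δ : ι → ℝ} (hsum : ∑ i, δ i = 0) :
    ∑ i, |δ i| = 2 * ∑ i, (δ i)⁺ := by
  simp only [← posPart_add_negPart, sum_add_distrib, ← sum_posPart_eq_sum_negPart hsum]
  ring

lemma sum_posPart_pos {δ : ι → ℝ} (hsum : ∑ i, δ i = 0) (hne : δ ≠ 0) :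
    0 < ∑ i, (δ i)⁺ := by
  obtain ⟨i, hi⟩ := Function.ne_iff.mp hne
  have : 0 < ∑ i, |δ i| := sum_pos' (fun j _ => abs_nonneg _) ⟨i, mem_univ i, abs_pos.mpr hi⟩
  linarith [sum_abs_eq_two_mul_sum_posPart hsum]

lemma sum_mul_mul_ite_sub_ite [DecidableEq ι] (a b : ι → ℝ) (k : ι) :
    ∑ p : ι × ι, a p.1 * b p.2 * ((if p.1 = k then 1 else 0) - (if p.2 = k then 1 else 0))
      = a k * ∑ j, b j - (∑ i, a i) * b k := by
  simp [Fintype.sum_prod_type, mul_sub, sum_sub_distrib, ← sum_mul, ← mul_sum]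

end

theorem stmt13_general {n : ℕ} (δ : Fin n → ℝ)
    (hsum : ∑ i, δ i = 0) (hne : δ ≠ 0) :
    ∃ (S : Finset (Fin n × Fin n)) (η : Fin n × Fin n → ℝ),
      (∀ p ∈ S, 0 < η p) ∧
      (∑ p ∈ S, η p) = ∑ i, |δ i| ∧
      ∀ k, δ k = ∑ p ∈ S,
        η p / 2 * ((if p.1 = k then (1 : ℝ) else 0) - (if p.2 = k then (1 : ℝ) else 0)) := by
  set T := ∑ i, (δ i)⁺
  have hT : 0 < T := sum_posPart_pos hsum hne
  have hneg : ∑ i, (δ i)⁻ = T := (sum_posPart_eq_sum_negPart hsum).symm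
  set η : Fin n × Fin n → ℝ := fun p => 2 / T * ((δ p.1)⁺ * (δ p.2)⁻)
  have hη : ∀ p, 0 ≤ η p := fun p => by positivity
  have hsupp {f : Fin n × Fin n → ℝ} (hf : ∀ p, η p = 0 → f p = 0) :
      ∑ p with 0 < η p, f p = ∑ p, f p :=
    sum_filter_of_ne fun p _ h => (hη p).lt_of_ne' fun h0 => h (hf p h0)
  refine ⟨univ.filter fun p => 0 < η p, η, fun p hp => (mem_filter.mp hp).2, ?_, fun k => ?_⟩
  · rw [hsupp fun _ => id, ← mul_sum]
    simp only [Fintype.sum_prod_type]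
    rw [← Fintype.sum_mul_sum, hneg, sum_abs_eq_two_mul_sum_posPart hsum]
    field_simp
  · rw [hsupp fun p h => by simp [h]]
    calc δ k = T⁻¹ * ((δ k)⁺ * T - T * (δ k)⁻) := by
          rw [mul_comm T, ← sub_mul, posPart_sub_negPart]
          field_simp
      _ = T⁻¹ * ∑ p : Fin n × Fin n,
            (δ p.1)⁺ * (δ p.2)⁻ * ((if p.1 = k then 1 else 0) - (if p.2 = k then 1 else 0)) := by
          rw [sum_mul_mul_ite_sub_ite (fun i => (δ i)⁺) (fun j => (δ j)⁻), hneg]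
      _ = _ := by
          rw [mul_sum]
          exact sum_congr rfl fun p _ => by ring

/-- Any nonzero mean-zero vector `δ ∈ ℝⁿ` decomposes as a positive combination
`δ = Σ_{(i,j)∈S} (η_{ij}/2)(e_i - e_j)` with `Σ η_{ij} = ‖δ‖₁`. -/
theorem stmt13 {n : ℕ} (hn : 2 ≤ n) (δ : Fin n → ℝ)
    (hsum : ∑ i, δ i = 0) (hne : δ ≠ 0) :
    ∃ (S : Finset (Fin n × Fin n)) (η : Fin n × Fin n → ℝ),
      (∀ p ∈ S, 0 < η p) ∧
      (∑ p ∈ S, η p) = ∑ i, |δ i| ∧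
      ∀ k, δ k = ∑ p ∈ S,
        η p / 2 * ((if p.1 = k then (1 : ℝ) else 0) - (if p.2 = k then (1 : ℝ) else 0)) :=
  stmt13_general δ hsum hne
end

section
/- Let P be the random walk matrix of a connected weighted bipartite graph G = (X,Y) with adjacency matrix A and degree matrix D (so P = D^{-1}A). Let s_X, s_Y ≥ 0 and let S be the diagonal matrix equal to s_X on X and s_Y on Y, and S̄ = sqrt(s_X·s_Y)·I. Then the following are equivalent: (1) D^{-1/2} A D^{-1/2} ⪯ S + vvᵀ for some vector v; (2) D^{-1/2} A D^{-1/2} ⪯ S̄ + wwᵀ for some vector w; (3) λ₂(P) ≤ sqrt(s_X·s_Y); (4) λ₂(P − S) ≤ 0. -/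
/-!
Conjugating by `D^{1/2}` turns the `μ`-weighted Courant–Fischer quantity `lambda2` of `P` into
the unweighted one of `N = D^{-1/2} A D^{-1/2}`. For a symmetric matrix `M` the latter is the
second-largest eigenvalue, which is also the least `c` with `M ⪯ c I + w wᵀ` for some `w`:
both say that at most one eigenvalue exceeds `c`, because the span of two eigenvectors with
eigenvalues above `c` meets every hyperplane. This gives (1) ⇔ (4) and (2) ⇔ (3).
Bipartiteness makes `N` invariant under the congruence by `diag(t on X, t⁻¹ on Y)`, which
turns a diagonal bound `(a on X, b on Y)` into `(t² a, b / t²)`; optimising over `t` trades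
`S` for `√(sX sY) I`. When `sX sY = 0` the optimum is only approached, which is why
(1) ⇒ (3) passes through the eigenvalue bound rather than through (2).
-/

/-- The second-largest eigenvalue of a matrix `M` that is self-adjoint with respect
to the inner product `⟨f,g⟩_μ = Σ_a μ(a) f(a) g(a)`, via the Courant–Fischer
variational characterization: the least `c` such that for some nonzero `v`, the
Rayleigh quotient of `M` is at most `c` on the `μ`-orthogonal complement of `v`. -/
noncomputable def lambda2 {α : Type*} [Fintype α] (M : Matrix α α ℝ) (μ : α → ℝ) : ℝ :=
  sInf {c : ℝ | ∃ v : α → ℝ, v ≠ 0 ∧ ∀ x : α → ℝ,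
    (∑ a, μ a * x a * v a) = 0 →
      (∑ a, μ a * x a * M.mulVec x a) ≤ c * ∑ a, μ a * x a * x a}

open Matrix Finset List
open scoped MatrixOrder

section

variable {n : Type*} [Fintype n]

/-- For symmetric `M` the least element of this set is the second-largest eigenvalue; it is the
set defining `lambda2` for the counting weight, written with `⬝ᵥ`. -/
def hyperplaneRayleighBounds (M : Matrix n n ℝ) : Set ℝ :=
  {c | ∃ v ≠ 0, ∀ z, z ⬝ᵥ v = 0 → z ⬝ᵥ M *ᵥ z ≤ c * (z ⬝ᵥ z)}

lemma hyperplaneRayleighBounds_mono {M : Matrix n n ℝ} {c c' : ℝ}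
    (hc : c ∈ hyperplaneRayleighBounds M) (hcc : c ≤ c') : c' ∈ hyperplaneRayleighBounds M := by
  obtain ⟨v, hv, h⟩ := hc
  exact ⟨v, hv, fun z hz => (h z hz).trans <|
    mul_le_mul_of_nonneg_right hcc (sum_nonneg fun a _ => mul_self_nonneg (z a))⟩

lemma dotProduct_mulVec_smul_one_add_vecMulVec [DecidableEq n] (c : ℝ) (w z : n → ℝ) :
    z ⬝ᵥ (c • 1 + vecMulVec w w) *ᵥ z = c * (z ⬝ᵥ z) + (z ⬝ᵥ w) ^ 2 := by
  simp [add_mulVec, smul_mulVec, vecMulVec_mulVec, dotProduct_add, dotProduct_smul, sq,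
    dotProduct_comm w z]

lemma dotProduct_mulVec_le_of_le {A B : Matrix n n ℝ} (h : A ≤ B) (z : n → ℝ) :
    z ⬝ᵥ A *ᵥ z ≤ z ⬝ᵥ B *ᵥ z := by
  have := (le_iff.mp h).dotProduct_mulVec_nonneg z
  rwa [star_trivial, sub_mulVec, dotProduct_sub, sub_nonneg] at this

lemma le_of_dotProduct_mulVec_le {A B : Matrix n n ℝ} (hA : A.IsHermitian) (hB : B.IsHermitian)
    (h : ∀ z, z ⬝ᵥ A *ᵥ z ≤ z ⬝ᵥ B *ᵥ z) : A ≤ B :=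
  le_iff.mpr <| .of_dotProduct_mulVec_nonneg (hB.sub hA) fun z => by
    rw [star_trivial, sub_mulVec, dotProduct_sub, sub_nonneg]
    exact h z

lemma mem_hyperplaneRayleighBounds_of_le [DecidableEq n] [Nonempty n] {M : Matrix n n ℝ}
    {c : ℝ} {w : n → ℝ} (h : M ≤ c • 1 + vecMulVec w w) : c ∈ hyperplaneRayleighBounds M := by
  obtain ⟨v, hv, hvw⟩ : ∃ v ≠ 0, ∀ z, z ⬝ᵥ v = 0 → z ⬝ᵥ w = 0 := by
    by_cases hw : w = 0
    · exact ⟨1, one_ne_zero, fun z _ => by simp [hw]⟩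
    · exact ⟨w, hw, fun z hz => hz⟩
  refine ⟨v, hv, fun z hz => ?_⟩
  simpa [dotProduct_mulVec_smul_one_add_vecMulVec, hvw z hz] using dotProduct_mulVec_le_of_le h z

namespace Matrix.IsHermitian

variable [DecidableEq n] {M : Matrix n n ℝ}

lemma eigenvectorBasis_dotProduct (hM : M.IsHermitian) (i j : n) :
    ⇑(hM.eigenvectorBasis i) ⬝ᵥ ⇑(hM.eigenvectorBasis j) = if i = j then 1 else 0 := by
  simpa [EuclideanSpace.inner_eq_star_dotProduct, dotProduct_comm] using
    orthonormal_iff_ite.mp hM.eigenvectorBasis.orthonormal i j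

lemma dotProduct_eq_sum_eigenvectorBasis (hM : M.IsHermitian) (x y : n → ℝ) :
    x ⬝ᵥ y = ∑ i, (x ⬝ᵥ ⇑(hM.eigenvectorBasis i)) * (y ⬝ᵥ ⇑(hM.eigenvectorBasis i)) := by
  simpa [EuclideanSpace.inner_eq_star_dotProduct, dotProduct_comm, mul_comm] using
    (hM.eigenvectorBasis.sum_inner_mul_inner (WithLp.toLp 2 x) (WithLp.toLp 2 y)).symm

lemma dotProduct_mulVec_eq_sum_eigenvalues (hM : M.IsHermitian) (x : n → ℝ) :
    x ⬝ᵥ M *ᵥ x = ∑ i, hM.eigenvalues i * (x ⬝ᵥ ⇑(hM.eigenvectorBasis i)) ^ 2 := by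
  rw [hM.dotProduct_eq_sum_eigenvectorBasis]
  refine sum_congr rfl fun i _ => ?_
  have hsymm : M *ᵥ x ⬝ᵥ ⇑(hM.eigenvectorBasis i) = x ⬝ᵥ M *ᵥ ⇑(hM.eigenvectorBasis i) := by
    rw [dotProduct_comm, dotProduct_mulVec, ← mulVec_transpose,
      ← conjTranspose_eq_transpose_of_trivial, hM.eq, dotProduct_comm]
  rw [hsymm, hM.mulVec_eigenvectorBasis, dotProduct_smul, smul_eq_mul]
  ring

lemma eigenvalues_le_of_mem_hyperplaneRayleighBounds (hM : M.IsHermitian) {c : ℝ}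
    (hc : c ∈ hyperplaneRayleighBounds M) {i j : n} (hij : i ≠ j) (hj : c < hM.eigenvalues j) :
    hM.eigenvalues i ≤ c := by
  obtain ⟨v, -, hv⟩ := hc
  set bi := ⇑(hM.eigenvectorBasis i)
  set bj := ⇑(hM.eigenvectorBasis j)
  obtain ⟨p, q, hpq, horth⟩ :
      ∃ p q : ℝ, (p ≠ 0 ∨ q ≠ 0) ∧ p * (bj ⬝ᵥ v) + q * (bi ⬝ᵥ v) = 0 := by
    by_cases h : bi ⬝ᵥ v = 0
    · exact ⟨0, 1, Or.inr one_ne_zero, by simp [h]⟩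
    · exact ⟨bi ⬝ᵥ v, -(bj ⬝ᵥ v), Or.inl h, by ring⟩
  have hx := hv (p • bj + q • bi) (by simpa [add_dotProduct, smul_dotProduct] using horth)
  simp only [mulVec_add, mulVec_smul, hM.mulVec_eigenvectorBasis, dotProduct_add, add_dotProduct,
    dotProduct_smul, smul_dotProduct, smul_eq_mul, bi, bj, hM.eigenvectorBasis_dotProduct,
    if_pos, if_neg hij, if_neg hij.symm] at hx
  by_contra! hi
  rcases hpq with hp | hq
  · nlinarith [sq_pos_of_ne_zero hp, sq_nonneg q]
  · nlinarith [sq_pos_of_ne_zero hq, sq_nonneg p]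

lemma exists_le_smul_one_add_vecMulVec (hM : M.IsHermitian) [Nonempty n] {c : ℝ}
    (hc : c ∈ hyperplaneRayleighBounds M) : ∃ w, M ≤ c • 1 + vecMulVec w w := by
  set ev := hM.eigenvalues
  set ξ := fun (z : n → ℝ) i => z ⬝ᵥ ⇑(hM.eigenvectorBasis i)
  obtain ⟨i₀, -, hi₀⟩ := exists_max_image univ ev univ_nonempty
  set e := max (ev i₀ - c) 0
  have hev : ∀ i, ev i ≤ c + if i = i₀ then e else 0 := by
    intro i
    split_ifs with h
    · subst h; linarith [le_max_left (ev i - c) 0]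
    · by_cases hc₀ : c < ev i₀
      · simpa using hM.eigenvalues_le_of_mem_hyperplaneRayleighBounds hc h hc₀
      · linarith [hi₀ i (mem_univ i)]
  refine ⟨√e • ⇑(hM.eigenvectorBasis i₀), le_of_dotProduct_mulVec_le hM
    ((isHermitian_one.smul (IsSelfAdjoint.all c)).add (by simp [IsHermitian])) fun z => ?_⟩
  rw [dotProduct_mulVec_smul_one_add_vecMulVec, dotProduct_smul, smul_eq_mul, mul_pow,
    Real.sq_sqrt (le_max_right _ _), hM.dotProduct_mulVec_eq_sum_eigenvalues,
    hM.dotProduct_eq_sum_eigenvectorBasis z z]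
  calc ∑ i, ev i * ξ z i ^ 2 ≤ ∑ i, (c + if i = i₀ then e else 0) * ξ z i ^ 2 :=
        sum_le_sum fun i _ => mul_le_mul_of_nonneg_right (hev i) (sq_nonneg _)
    _ = c * ∑ i, ξ z i * ξ z i + e * ξ z i₀ ^ 2 := by
        simp [add_mul, sum_add_distrib, mul_sum, sq]

lemma exists_isLeast_hyperplaneRayleighBounds (hM : M.IsHermitian) (hn : 1 < Fintype.card n) :
    ∃ l, IsLeast (hyperplaneRayleighBounds M) l := by
  have : Nonempty n := Fintype.card_pos_iff.mp (by omega)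
  set ev := hM.eigenvalues
  obtain ⟨i₀, -, hi₀⟩ := exists_max_image univ ev univ_nonempty
  obtain ⟨i₁, hi₁, hi₁max⟩ := exists_max_image (univ.erase i₀) ev <| by
    rw [← card_pos, card_erase_of_mem (mem_univ i₀), card_univ]; omega
  refine ⟨ev i₁, ⟨⇑(hM.eigenvectorBasis i₀), ?_, fun z hz => ?_⟩, fun c hc => ?_⟩
  · simpa using hM.eigenvectorBasis.orthonormal.ne_zero i₀
  · rw [hM.dotProduct_mulVec_eq_sum_eigenvalues, hM.dotProduct_eq_sum_eigenvectorBasis z z,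
      mul_sum]
    refine sum_le_sum fun i _ => ?_
    by_cases h : i = i₀
    · simp [h, hz]
    · rw [← sq]
      exact mul_le_mul_of_nonneg_right (hi₁max i (mem_erase.mpr ⟨h, mem_univ i⟩)) (sq_nonneg _)
  · by_contra! hlt
    exact hlt.not_ge <| hM.eigenvalues_le_of_mem_hyperplaneRayleighBounds hc
      (ne_of_mem_erase hi₁) (hlt.trans_le (hi₀ i₁ (mem_univ i₁)))

lemma sInf_hyperplaneRayleighBounds_le_iff (hM : M.IsHermitian) (hn : 1 < Fintype.card n)
    {c : ℝ} : sInf (hyperplaneRayleighBounds M) ≤ c ↔ ∃ w, M ≤ c • 1 + vecMulVec w w := by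
  have : Nonempty n := Fintype.card_pos_iff.mp (by omega)
  obtain ⟨l, hl⟩ := hM.exists_isLeast_hyperplaneRayleighBounds hn
  rw [hl.csInf_eq]
  exact ⟨fun h => hM.exists_le_smul_one_add_vecMulVec (hyperplaneRayleighBounds_mono hl.1 h),
    fun ⟨w, hw⟩ => hl.2 (mem_hyperplaneRayleighBounds_of_le hw)⟩

end Matrix.IsHermitian

lemma lambda2_eq_sInf_hyperplaneRayleighBounds {P N : Matrix n n ℝ} {μ d : n → ℝ}
    (hd : ∀ a, d a ≠ 0) (hμ : ∀ a, μ a = d a ^ 2)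
    (hPN : ∀ a b, μ a * P a b = d a * N a b * d b) :
    lambda2 P μ = sInf (hyperplaneRayleighBounds N) := by
  have hdot : ∀ x y : n → ℝ, ∑ a, μ a * x a * y a = (d * x) ⬝ᵥ (d * y) := fun x y =>
    sum_congr rfl fun a _ => by rw [hμ]; simp only [Pi.mul_apply]; ring
  have hquad : ∀ x : n → ℝ, ∑ a, μ a * x a * (P *ᵥ x) a = (d * x) ⬝ᵥ N *ᵥ (d * x) := fun x =>
    sum_congr rfl fun a _ => by
      simp only [mulVec, dotProduct, Pi.mul_apply, mul_sum]
      exact sum_congr rfl fun b _ => by linear_combination (x a * x b) * hPN a b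
  have hcancel : ∀ z : n → ℝ, d * (d⁻¹ * z) = z := fun z => funext fun a => by simp [hd a]
  have hcancel' : ∀ z : n → ℝ, d⁻¹ * (d * z) = z := fun z => funext fun a => by simp [hd a]
  unfold lambda2
  congr 1
  ext c
  simp only [Set.mem_ofPred_eq, hquad, hyperplaneRayleighBounds]
  simp only [hdot]
  constructor
  · rintro ⟨v, hv, h⟩
    refine ⟨d * v, fun h0 => hv (by rw [← hcancel' v, h0, mul_zero]), fun z hz => ?_⟩
    simpa only [hcancel] using h (d⁻¹ * z) (by rwa [hcancel])
  · rintro ⟨v, hv, h⟩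
    refine ⟨d⁻¹ * v, fun h0 => hv (by rw [← hcancel v, h0, mul_zero]), fun x hx => ?_⟩
    exact h (d * x) (by rwa [hcancel] at hx)

lemma le_diagonal_add_vecMulVec_of_conj [DecidableEq n] {N : Matrix n n ℝ} {d s v : n → ℝ}
    (hd : ∀ a b, d a * N a b * d b = N a b) (h : N ≤ diagonal s + vecMulVec v v) :
    N ≤ diagonal (d ^ 2 * s) + vecMulVec (d * v) (d * v) := by
  rw [le_iff]
  convert (le_iff.mp h).conjTranspose_mul_mul_same (diagonal d) using 1
  ext a b
  simp only [Matrix.sub_apply, Matrix.add_apply, diagonal_apply, vecMulVec_apply, Pi.mul_apply,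
    Pi.pow_apply, conjTranspose_eq_transpose_of_trivial, diagonal_transpose, mul_diagonal,
    diagonal_mul]
  split_ifs with hab
  · subst hab
    linear_combination hd a a
  · linear_combination hd a b

lemma exists_le_diagonal_add_vecMulVec_of_bipartite [DecidableEq n] {part : n → Bool}
    {N : Matrix n n ℝ} (hN : ∀ a b, part a = part b → N a b = 0) {s s' v : n → ℝ}
    (h : N ≤ diagonal s + vecMulVec v v) {u : ℝ} (hu : 0 < u)
    (hs : ∀ a, (if part a then u else u⁻¹) * s a ≤ s' a) :
    ∃ w, N ≤ diagonal s' + vecMulVec w w := by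
  set d : n → ℝ := fun a => if part a then √u else (√u)⁻¹
  have hd : ∀ a b, d a * N a b * d b = N a b := by
    intro a b
    by_cases hab : part a = part b
    · simp [hN a b hab]
    · have : d a * d b = 1 := by
        cases ha : part a <;> cases hb : part b <;> simp_all [d, (Real.sqrt_pos.mpr hu).ne']
      linear_combination N a b * this
  refine ⟨d * v, (le_diagonal_add_vecMulVec_of_conj hd h).trans ?_⟩
  refine add_le_add_left (le_iff.mpr ?_) _
  rw [diagonal_sub, posSemidef_diagonal_iff]
  intro a
  have hd2 : d a ^ 2 = if part a then u else u⁻¹ := by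
    by_cases ha : part a <;> simp [d, ha, inv_pow, Real.sq_sqrt hu.le]
  simpa [hd2] using hs a

lemma exists_mul_sqrt_mul_le_and_inv_mul_sqrt_mul_le {p q : ℝ} (hp : 0 ≤ p) (hq : 0 ≤ q) :
    ∃ u > 0, u * √(p * q) ≤ p ∧ u⁻¹ * √(p * q) ≤ q := by
  rcases (Real.sqrt_nonneg (p * q)).eq_or_lt with hc | hc
  · exact ⟨1, one_pos, by simp [← hc, hp, hq]⟩
  · have hp' : 0 < p := hp.lt_of_ne (by rintro rfl; simp at hc)
    refine ⟨p / √(p * q), div_pos hp' hc, (div_mul_cancel₀ p hc.ne').le, le_of_eq ?_⟩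
    rw [inv_div, div_mul_eq_mul_div, Real.mul_self_sqrt (mul_nonneg hp hq),
      mul_div_cancel_left₀ q hp'.ne']

lemma le_sqrt_mul_of_forall_le_max {p q b : ℝ} (hp : 0 ≤ p) (hq : 0 ≤ q)
    (h : ∀ u > 0, b ≤ max (u * p) (u⁻¹ * q)) : b ≤ √(p * q) := by
  by_contra! hlt
  have hb : 0 < b := (Real.sqrt_nonneg _).trans_lt hlt
  have hpq : p * q < b ^ 2 := (Real.sqrt_lt' hb).mp hlt
  obtain ⟨η, hη, hpη⟩ : ∃ η > 0, p * η < b ^ 2 - p * q :=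
    ⟨(b ^ 2 - p * q) / (p + 1), by positivity, by
      rw [mul_div_assoc', div_lt_iff₀ (by positivity)]; nlinarith⟩
  have hu := h ((q + η) / b) (by positivity)
  have h1 : (q + η) / b * p < b := by
    rw [div_mul_eq_mul_div, div_lt_iff₀ hb]; nlinarith
  have h2 : ((q + η) / b)⁻¹ * q < b := by
    rw [inv_div, div_mul_eq_mul_div, div_lt_iff₀ (by positivity)]; nlinarith
  exact (max_lt h1 h2).not_ge hu

theorem tfae_le_add_vecMulVec_of_bipartite [DecidableEq n] {part : n → Bool}
    {N : Matrix n n ℝ} (hN : N.IsHermitian) (hbip : ∀ a b, part a = part b → N a b = 0)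
    (hn : 1 < Fintype.card n) {sX sY : ℝ} (hsX : 0 ≤ sX) (hsY : 0 ≤ sY) :
    TFAE [∃ v, N ≤ diagonal (fun a => if part a then sX else sY) + vecMulVec v v,
      ∃ w, N ≤ √(sX * sY) • 1 + vecMulVec w w,
      sInf (hyperplaneRayleighBounds N) ≤ √(sX * sY),
      sInf (hyperplaneRayleighBounds (N - diagonal fun a => if part a then sX else sY)) ≤ 0] := by
  tfae_have 1 ↔ 4 := by
    rw [(hN.sub (isHermitian_diagonal _)).sInf_hyperplaneRayleighBounds_le_iff hn]
    simp only [zero_smul, zero_add, sub_le_iff_le_add']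
  tfae_have 2 ↔ 3 := (hN.sInf_hyperplaneRayleighBounds_le_iff hn).symm
  tfae_have 2 → 1 := by
    rintro ⟨w, hw⟩
    obtain ⟨u, hu, huX, huY⟩ := exists_mul_sqrt_mul_le_and_inv_mul_sqrt_mul_le hsX hsY
    rw [smul_one_eq_diagonal] at hw
    exact exists_le_diagonal_add_vecMulVec_of_bipartite hbip hw hu fun a => by
      split_ifs <;> assumption
  tfae_have 1 → 3 := by
    rintro ⟨v, hv⟩
    refine le_sqrt_mul_of_forall_le_max hsX hsY fun u hu => ?_
    rw [hN.sInf_hyperplaneRayleighBounds_le_iff hn, smul_one_eq_diagonal]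
    refine exists_le_diagonal_add_vecMulVec_of_bipartite hbip hv hu fun a => ?_
    split_ifs
    · exact le_max_left _ _
    · exact le_max_right _ _
  tfae_finish

end

lemma mul_sub_diagonal_apply_of_mul_apply {n : Type*} [DecidableEq n] {P N : Matrix n n ℝ}
    {μ d : n → ℝ} (hμ : ∀ a, μ a = d a ^ 2) (hPN : ∀ a b, μ a * P a b = d a * N a b * d b)
    (s : n → ℝ) (a b : n) : μ a * (P - diagonal s) a b = d a * (N - diagonal s) a b * d b := by
  by_cases hab : a = b
  · subst hab
    simp only [Matrix.sub_apply, diagonal_apply_eq]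
    linear_combination hPN a a - s a * hμ a
  · simp only [Matrix.sub_apply, diagonal_apply_ne _ hab, sub_zero, hPN]

theorem stmt16_general {α : Type*} [Fintype α] [DecidableEq α]
    (A : Matrix α α ℝ) (part : α → Bool)
    (hsymm : ∀ x y, A x y = A y x)
    (hbip : ∀ x y, A x y ≠ 0 → part x ≠ part y)
    (hX : ∃ x, part x = true) (hY : ∃ y, part y = false)
    (hdegpos : ∀ x, 0 < ∑ y, A x y)
    (sX sY : ℝ) (hsX : 0 ≤ sX) (hsY : 0 ≤ sY) :
    List.TFAE [
      (∃ v : α → ℝ,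
        ((Matrix.diagonal fun x => if part x then sX else sY) + Matrix.vecMulVec v v -
          Matrix.of fun x y => A x y / (Real.sqrt (∑ z, A x z) * Real.sqrt (∑ z, A y z))).PosSemidef),
      (∃ w : α → ℝ,
        (Real.sqrt (sX * sY) • (1 : Matrix α α ℝ) + Matrix.vecMulVec w w -
          Matrix.of fun x y => A x y / (Real.sqrt (∑ z, A x z) * Real.sqrt (∑ z, A y z))).PosSemidef),
      lambda2 (Matrix.of fun x y => A x y / (∑ z, A x z)) (fun x => ∑ z, A x z) ≤
        Real.sqrt (sX * sY),
      lambda2 ((Matrix.of fun x y => A x y / (∑ z, A x z)) -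
          (Matrix.diagonal fun x => if part x then sX else sY)) (fun x => ∑ z, A x z) ≤ 0] := by
  set μ : α → ℝ := fun x => ∑ z, A x z
  set d : α → ℝ := fun x => √(∑ z, A x z)
  set N : Matrix α α ℝ := Matrix.of fun x y => A x y / (d x * d y)
  set P : Matrix α α ℝ := Matrix.of fun x y => A x y / μ x
  have hd : ∀ a, d a ≠ 0 := fun a => (Real.sqrt_pos.mpr (hdegpos a)).ne'
  have hμ : ∀ a, μ a = d a ^ 2 := fun a => (Real.sq_sqrt (hdegpos a).le).symm
  have hPN : ∀ a b, μ a * P a b = d a * N a b * d b := fun a b => by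
    simp only [P, N, of_apply]
    field_simp [show μ a ≠ 0 from (hdegpos a).ne', hd a, hd b]
  have hN : N.IsHermitian := by
    ext a b
    simp only [N, conjTranspose_apply, of_apply, star_trivial, hsymm b a, mul_comm (d b)]
  have hbipN : ∀ a b, part a = part b → N a b = 0 := fun a b hab => by
    simp [N, not_imp_not.mp (hbip a b) hab]
  have hcard : 1 < Fintype.card α := by
    obtain ⟨⟨x, hx⟩, ⟨y, hy⟩⟩ := And.intro hX hY
    exact Fintype.one_lt_card_iff.mpr ⟨x, y, by rintro rfl; simp_all⟩
  rw [lambda2_eq_sInf_hyperplaneRayleighBounds hd hμ hPN,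
    lambda2_eq_sInf_hyperplaneRayleighBounds hd hμ (mul_sub_diagonal_apply_of_mul_apply hμ hPN _)]
  exact tfae_le_add_vecMulVec_of_bipartite hN hbipN hcard hsX hsY

/-- Equivalent eigenvalue bounds for the random walk on a connected weighted
bipartite graph with parts `X = {part = true}` and `Y = {part = false}`,
adjacency matrix `A`, degrees `deg`, walk matrix `P = D⁻¹A`, normalized adjacency
`N = D^{-1/2} A D^{-1/2}`, and diagonal matrix `S` equal to `sX` on `X` and `sY`
on `Y`. -/
theorem stmt16 {α : Type*} [Fintype α] [DecidableEq α]
    (A : Matrix α α ℝ) (part : α → Bool)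
    (hsymm : ∀ x y, A x y = A y x) (hnn : ∀ x y, 0 ≤ A x y)
    (hbip : ∀ x y, A x y ≠ 0 → part x ≠ part y)
    (hX : ∃ x, part x = true) (hY : ∃ y, part y = false)
    (hdegpos : ∀ x, 0 < ∑ y, A x y)
    (hconn : ∀ x y : α, ∃ (k : ℕ) (q : Fin (k + 1) → α), q 0 = x ∧ q (Fin.last k) = y ∧
      ∀ i : Fin k, 0 < A (q i.castSucc) (q i.succ))
    (sX sY : ℝ) (hsX : 0 ≤ sX) (hsY : 0 ≤ sY) :
    List.TFAE [
      (∃ v : α → ℝ,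
        ((Matrix.diagonal fun x => if part x then sX else sY) + Matrix.vecMulVec v v -
          Matrix.of fun x y => A x y / (Real.sqrt (∑ z, A x z) * Real.sqrt (∑ z, A y z))).PosSemidef),
      (∃ w : α → ℝ,
        (Real.sqrt (sX * sY) • (1 : Matrix α α ℝ) + Matrix.vecMulVec w w -
          Matrix.of fun x y => A x y / (Real.sqrt (∑ z, A x z) * Real.sqrt (∑ z, A y z))).PosSemidef),
      lambda2 (Matrix.of fun x y => A x y / (∑ z, A x z)) (fun x => ∑ z, A x z) ≤
        Real.sqrt (sX * sY),
      lambda2 ((Matrix.of fun x y => A x y / (∑ z, A x z)) -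
          (Matrix.diagonal fun x => if part x then sX else sY)) (fun x => ∑ z, A x z) ≤ 0] :=
  stmt16_general A part hsymm hbip hX hY hdegpos sX sY hsX hsY
end
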